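/- arXiv:1502.00342 — 8 statements merged into one kernel-verified Lean document; each statement's English description precedes it below -/
import Mathlib

section
/- For all integers n ≥ 1 and all integers a with 1 ≤ a ≤ n, the ratio C(2n, n-a)/C(2n, n) is at most exp(-((2n-1)/(2n)) · (a²/n)). -/
/-- Key analytic lemma: `(1 - x) * exp (2x) ≤ 1 + x` for `x ≥ 0`,
i.e. `(1-x)/(1+x) ≤ exp (-2x)`. -/
lemma aux_key (x : ℝ) (hx : 0 ≤ x) : (1 - x) * Real.exp (2 * x) ≤ 1 + x := by
  set f : ℝ → ℝ := fun y => 1 + y - (1 - y) * Real.exp (2 * y) with hf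
  have H : ∀ y : ℝ, HasDerivAt f (1 - (1 - 2 * y) * Real.exp (2 * y)) y := by
    intro y
    have h1 : HasDerivAt (fun y : ℝ => 2 * y) 2 y := by
      simpa using (hasDerivAt_id y).const_mul (2 : ℝ)
    have h2 : HasDerivAt (fun y : ℝ => Real.exp (2 * y)) (Real.exp (2 * y) * 2) y :=
      h1.exp
    have h3 : HasDerivAt (fun y : ℝ => 1 - y) (-1) y := by
      simpa using (hasDerivAt_id y).const_sub (1 : ℝ)
    have h4 := h3.mul h2
    have h5 : HasDerivAt (fun y : ℝ => 1 + y) 1 y := by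
      simpa using (hasDerivAt_id y).const_add (1 : ℝ)
    have := h5.sub h4
    exact this.congr_deriv (by ring)
  have hmono : MonotoneOn f (Set.Ici (0 : ℝ)) := by
    apply monotoneOn_of_deriv_nonneg (convex_Ici 0)
    · exact fun y _ => ((H y).differentiableAt).continuousAt.continuousWithinAt
    · exact fun y _ => ((H y).differentiableAt).differentiableWithinAt
    · intro y _
      rw [(H y).deriv]
      have h6 : 1 - 2 * y ≤ Real.exp (-(2 * y)) := by
        have := Real.add_one_le_exp (-(2 * y)); linarith
      have h7 := mul_le_mul_of_nonneg_right h6 (Real.exp_pos (2 * y)).le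
      rw [← Real.exp_add] at h7
      simp at h7
      linarith
  have h8 := hmono Set.self_mem_Ici (Set.mem_Ici.mpr hx) hx
  simp only [hf, mul_zero, Real.exp_zero] at h8
  norm_num at h8
  linarith

/-- Per-step ratio bound. -/
lemma aux_step (n a : ℕ) (hn : 1 ≤ n) (ha : a + 1 ≤ n) :
    ((n : ℝ) - a) / ((n : ℝ) + a + 1) ≤
      Real.exp (-((2 * (n : ℝ) - 1) / (2 * n)) * ((2 * (a : ℝ) + 1) / n)) := by
  have hnR : (1 : ℝ) ≤ (n : ℝ) := by exact_mod_cast hn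
  have haR : (a : ℝ) + 1 ≤ (n : ℝ) := by exact_mod_cast ha
  have haR0 : (0 : ℝ) ≤ (a : ℝ) := Nat.cast_nonneg a
  set x : ℝ := (2 * a + 1) / (2 * n + 1) with hxdef
  have hden : (0 : ℝ) < 2 * n + 1 := by linarith
  have hx0 : 0 ≤ x := by positivity
  have hkey := aux_key x hx0
  have h1x : (0 : ℝ) < 1 + x := by linarith
  -- (1-x)/(1+x) = (n-a)/(n+a+1)
  have heq : ((n : ℝ) - a) / ((n : ℝ) + a + 1) = (1 - x) / (1 + x) := by
    rw [hxdef]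
    rw [div_eq_div_iff (by linarith) (by positivity)]
    field_simp
    ring
  have hfrac : (1 - x) / (1 + x) ≤ Real.exp (-(2 * x)) := by
    rw [div_le_iff₀ h1x, Real.exp_neg, inv_mul_eq_div, le_div_iff₀ (Real.exp_pos _)]
    exact hkey
  have hexp : Real.exp (-(2 * x)) ≤
      Real.exp (-((2 * (n : ℝ) - 1) / (2 * n)) * ((2 * (a : ℝ) + 1) / n)) := by
    apply Real.exp_le_exp.mpr
    have h9 : ((2 * (n : ℝ) - 1) / (2 * n)) * ((2 * (a : ℝ) + 1) / n) ≤ 2 * x := by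
      rw [hxdef, div_mul_div_comm, mul_div_assoc', div_le_div_iff₀ (by positivity) hden]
      nlinarith [haR0, hnR]
    linarith
  calc ((n : ℝ) - a) / ((n : ℝ) + a + 1) = (1 - x) / (1 + x) := heq
    _ ≤ Real.exp (-(2 * x)) := hfrac
    _ ≤ _ := hexp

theorem stmt0 (n a : ℕ) (hn : 1 ≤ n) (ha1 : 1 ≤ a) (han : a ≤ n) :
    ((2 * n).choose (n - a) : ℝ) / ((2 * n).choose n) ≤
      Real.exp (-((2 * (n : ℝ) - 1) / (2 * n)) * ((a : ℝ) ^ 2 / n)) := by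
  clear ha1
  induction a with
  | zero =>
      have hpos : (0 : ℝ) < ((2 * n).choose n : ℝ) := by
        exact_mod_cast Nat.choose_pos (by omega : n ≤ 2 * n)
      simp only [Nat.sub_zero, Nat.cast_zero, div_self hpos.ne']
      simp
  | succ a ih =>
      have ha : a + 1 ≤ n := han
      have ih' := ih (by omega)
      have hcpos : (0 : ℝ) < ((2 * n).choose n : ℝ) := by
        exact_mod_cast Nat.choose_pos (by omega : n ≤ 2 * n)
      -- recurrence on binomial coefficients
      have hrec : ((2 * n).choose (n - (a + 1)) : ℝ) * ((n : ℝ) + a + 1) =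
          ((2 * n).choose (n - a) : ℝ) * ((n : ℝ) - a) := by
        have h := Nat.choose_succ_right_eq (2 * n) (n - a - 1)
        have h1 : n - a - 1 + 1 = n - a := by omega
        have h2 : 2 * n - (n - a - 1) = n + a + 1 := by omega
        have h3 : n - (a + 1) = n - a - 1 := by omega
        rw [h1, h2] at h
        rw [h3]
        have := congrArg (fun k : ℕ => (k : ℝ)) h
        push_cast at this
        rw [Nat.cast_sub (by omega : a ≤ n)] at this
        linarith [this]
      have hdpos : (0 : ℝ) < (n : ℝ) + a + 1 := by positivity
      have hR : ((2 * n).choose (n - (a + 1)) : ℝ) / ((2 * n).choose n) =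
          (((2 * n).choose (n - a) : ℝ) / ((2 * n).choose n)) *
            (((n : ℝ) - a) / ((n : ℝ) + a + 1)) := by
        field_simp
        linear_combination hrec
      rw [hR]
      have hstep := aux_step n a hn ha
      have hnonneg : (0 : ℝ) ≤ ((2 * n).choose (n - a) : ℝ) / ((2 * n).choose n) := by
        positivity
      have hfrac_nonneg : (0 : ℝ) ≤ ((n : ℝ) - a) / ((n : ℝ) + a + 1) := by
        have : (a : ℝ) + 1 ≤ (n : ℝ) := by exact_mod_cast ha
        apply div_nonneg <;> linarith
      calc (((2 * n).choose (n - a) : ℝ) / ((2 * n).choose n)) *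
            (((n : ℝ) - a) / ((n : ℝ) + a + 1))
          ≤ Real.exp (-((2 * (n : ℝ) - 1) / (2 * n)) * ((a : ℝ) ^ 2 / n)) *
            Real.exp (-((2 * (n : ℝ) - 1) / (2 * n)) * ((2 * (a : ℝ) + 1) / n)) := by
            exact mul_le_mul ih' hstep hfrac_nonneg (Real.exp_pos _).le
        _ = Real.exp (-((2 * (n : ℝ) - 1) / (2 * n)) * (((a : ℕ) + 1 : ℝ) ^ 2 / n)) := by
            rw [← Real.exp_add]
            congr 1
            have hnne : (n : ℝ) ≠ 0 := by positivity
            field_simp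
            ring
        _ = Real.exp (-((2 * (n : ℝ) - 1) / (2 * n)) * (((a + 1 : ℕ) : ℝ) ^ 2 / n)) := by
            push_cast; ring_nf
end

section
/- For all integers n ≥ 1 and all integers a with 1 ≤ a ≤ ⌊√(2n)⌋, the ratio C(2n, n-a)/C(2n, n) is strictly greater than exp(-a²/n). -/
open Real Finset

lemma logBound {x : ℝ} (hx : 1 < x) :
    Real.log x < 2*(x-1)/(x+1) + (x-1)^3/(6*x*(x+1)) := by
  set F : ℝ → ℝ := fun y => 2*(y-1)/(y+1) + (y-1)^3/(6*y*(y+1)) - Real.log y with hF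
  have hd : ∀ y : ℝ, 0 < y → HasDerivAt F ((y-1)^4/(6*y^2*(y+1)^2)) y := by
    intro y hy
    have hy0 : y ≠ 0 := ne_of_gt hy
    have hy1 : y + 1 ≠ 0 := by linarith
    have h1 : HasDerivAt (fun z : ℝ => 2*(z-1)/(z+1))
        ((2*1*(y+1) - 2*(y-1)*1)/(y+1)^2) y :=
      (((hasDerivAt_id y).sub_const 1).const_mul 2).div ((hasDerivAt_id y).add_const 1) hy1
    have h2 : HasDerivAt (fun z : ℝ => (z-1)^3/(6*z*(z+1)))
        (((3*(y-1)^2*1)*(6*y*(y+1)) - (y-1)^3*((6*1)*(y+1) + 6*y*1))/(6*y*(y+1))^2) y := by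
      have hnum : HasDerivAt (fun z : ℝ => (z-1)^3) (3*(y-1)^2*1) y := by
        simpa using (((hasDerivAt_id y).sub_const 1).fun_pow 3)
      have hden : HasDerivAt (fun z : ℝ => 6*z*(z+1)) ((6*1)*(y+1) + 6*y*1) y :=
        (((hasDerivAt_id y).const_mul 6).mul ((hasDerivAt_id y).add_const 1))
      exact hnum.div hden (by positivity)
    have h3 : HasDerivAt Real.log y⁻¹ y := Real.hasDerivAt_log hy0
    have := (h1.add h2).sub h3
    refine this.congr_deriv ?_
    field_simp
    ring
  have hmono : StrictMonoOn F (Set.Ici 1) := by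
    apply strictMonoOn_of_deriv_pos (convex_Ici 1)
    · intro y hy
      have hy0 : (0:ℝ) < y := lt_of_lt_of_le one_pos hy
      exact (hd y hy0).continuousAt.continuousWithinAt
    · intro y hy
      rw [interior_Ici] at hy
      have hy1 : (1:ℝ) < y := hy
      have hy0 : (0:ℝ) < y := by linarith
      rw [(hd y hy0).deriv]
      have hy2 : (0:ℝ) < y - 1 := by linarith
      have h4 : (0:ℝ) < (y-1)^4 := by positivity
      have h5 : (0:ℝ) < 6*y^2*(y+1)^2 := by positivity
      exact div_pos h4 h5
  have h0 : F 1 = 0 := by simp [hF]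
  have := hmono (Set.self_mem_Ici) (Set.mem_Ici.2 hx.le) hx
  rw [h0] at this
  simp only [hF] at this
  linarith
open Real Finset

lemma prodId (n : ℕ) : ∀ b : ℕ, b ≤ n →
    ((2*n).choose (n-b) : ℝ) = ((2*n).choose n : ℝ) *
      ∏ i ∈ Finset.range b, (((n:ℝ)-i)/((n:ℝ)+i+1)) := by
  intro b
  induction b with
  | zero => simp
  | succ b ih =>
    intro hbn
    have hb : b ≤ n := Nat.le_of_succ_le hbn
    have key : ((2*n).choose (n-b) : ℝ) * ((n:ℝ) - b) =
        ((2*n).choose (n-(b+1)) : ℝ) * ((n:ℝ)+b+1) := by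
      have h := Nat.choose_succ_right_eq (2*n) (n-(b+1))
      have h1 : n - (b+1) + 1 = n - b := by omega
      have h2 : 2*n - (n - (b+1)) = n + b + 1 := by omega
      rw [h1, h2] at h
      have := congrArg (fun m : ℕ => (m : ℝ)) h
      push_cast [Nat.cast_sub hb] at this
      linarith [this]
    have hpos : ((n:ℝ)+b+1) ≠ 0 := by positivity
    have : ((2*n).choose (n-(b+1)) : ℝ) =
        ((2*n).choose (n-b) : ℝ) * (((n:ℝ)-b)/((n:ℝ)+b+1)) := by
      field_simp
      linarith [key]
    rw [this, ih hb, Finset.prod_range_succ]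
    ring

lemma sumOdd (a : ℕ) : ∑ i ∈ Finset.range a, (2*(i:ℝ)+1) = (a:ℝ)^2 := by
  induction a with
  | zero => simp
  | succ a ih => rw [Finset.sum_range_succ, ih]; push_cast; ring

lemma sumOddCube (a : ℕ) :
    ∑ i ∈ Finset.range a, (2*(i:ℝ)+1)^3 = (a:ℝ)^2*(2*(a:ℝ)^2-1) := by
  induction a with
  | zero => simp
  | succ a ih => rw [Finset.sum_range_succ, ih]; push_cast; ring

lemma keyIneq (nr ar : ℝ) (hn : 1 ≤ nr) (ha : 1 ≤ ar) (ha2 : ar^2 ≤ 2*nr) :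
    nr*(2*ar^2-1) ≤ 6*((nr+ar)*(nr+1-ar)) := by
  nlinarith [mul_le_mul_of_nonneg_left ha2 (by linarith : (0:ℝ) ≤ nr),
    sq_nonneg (nr-2), sq_nonneg (ar-1)]

lemma finalIneq (nr ar Dr : ℝ) (hn : 1 ≤ nr) (ha : 1 ≤ ar) (hDr : 0 < Dr)
    (hKey : nr*(2*ar^2-1) ≤ 6*Dr) :
    2*ar^2/(2*nr+1) + ar^2*(2*ar^2-1)/(6*Dr*(2*nr+1)) ≤ ar^2/nr := by
  have hn0 : (0:ℝ) < nr := by linarith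
  have h2n1 : (0:ℝ) < 2*nr+1 := by linarith
  have step1 : ar^2*(2*ar^2-1)/(6*Dr*(2*nr+1)) ≤ ar^2/(nr*(2*nr+1)) := by
    rw [div_le_div_iff₀ (by positivity) (by positivity)]
    nlinarith [mul_le_mul_of_nonneg_left hKey (by positivity : (0:ℝ) ≤ ar^2*(2*nr+1))]
  have step2 : 2*ar^2/(2*nr+1) + ar^2/(nr*(2*nr+1)) = ar^2/nr := by
    field_simp
  linarith

theorem stmt1 (n a : ℕ) (hn : 1 ≤ n) (ha1 : 1 ≤ a) (ha : a ≤ Nat.sqrt (2 * n)) :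
    ((2 * n).choose (n - a) : ℝ) / ((2 * n).choose n) >
      Real.exp (-((a : ℝ) ^ 2 / n)) := by
  have haa : a * a ≤ 2 * n := Nat.le_sqrt.mp ha
  have han : a ≤ n := by nlinarith [haa, ha1]
  have hnR : (1:ℝ) ≤ (n:ℝ) := by exact_mod_cast hn
  have haR : (1:ℝ) ≤ (a:ℝ) := by exact_mod_cast ha1
  have ha2 : (a:ℝ)^2 ≤ 2*(n:ℝ) := by
    have : ((a*a : ℕ) : ℝ) ≤ ((2*n : ℕ) : ℝ) := by exact_mod_cast haa
    push_cast at this; nlinarith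
  have haN : (a:ℝ) ≤ (n:ℝ) := by exact_mod_cast han
  set D : ℝ := ((n:ℝ)+a)*((n:ℝ)+1-a) with hD
  have hDpos : 0 < D := by
    apply mul_pos <;> nlinarith
  set B : ℕ → ℝ := fun i =>
    2*(2*(i:ℝ)+1)/(2*(n:ℝ)+1) + (2*(i:ℝ)+1)^3/(6*D*(2*(n:ℝ)+1)) with hB
  -- per-factor bound
  have factor : ∀ i ∈ Finset.range a,
      Real.exp (-(B i)) < ((n:ℝ)-i)/((n:ℝ)+i+1) := by
    intro i hi
    have hia : (i:ℝ) + 1 ≤ (a:ℝ) := by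
      have : i + 1 ≤ a := Finset.mem_range.mp hi
      exact_mod_cast this
    have hni : 0 < (n:ℝ) - i := by linarith
    have hni2 : 0 < (n:ℝ) + i + 1 := by positivity
    set x : ℝ := ((n:ℝ)+i+1)/((n:ℝ)-i) with hx
    have hx1 : 1 < x := by
      rw [hx, lt_div_iff₀ hni]; linarith
    have hlog := logBound hx1
    have hEq : 2*(x-1)/(x+1) + (x-1)^3/(6*x*(x+1)) =
        2*(2*(i:ℝ)+1)/(2*(n:ℝ)+1) +
          (2*(i:ℝ)+1)^3/(6*(((n:ℝ)-i)*((n:ℝ)+i+1))*(2*(n:ℝ)+1)) := by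
      rw [hx]
      have h1 : ((n:ℝ)-i) ≠ 0 := ne_of_gt hni
      have h2 : ((n:ℝ)+i+1) ≠ 0 := ne_of_gt hni2
      have h3 : (2*(n:ℝ)+1) ≠ 0 := by positivity
      field_simp
      ring
    have hmono : (2*(i:ℝ)+1)^3/(6*(((n:ℝ)-i)*((n:ℝ)+i+1))*(2*(n:ℝ)+1)) ≤
        (2*(i:ℝ)+1)^3/(6*D*(2*(n:ℝ)+1)) := by
      apply div_le_div_of_nonneg_left (by positivity) (by positivity)
      have hDle : D ≤ ((n:ℝ)-i)*((n:ℝ)+i+1) := by nlinarith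
      nlinarith
    have hlogB : Real.log x < B i := by
      rw [hB]; rw [hEq] at hlog; dsimp only; linarith
    have hxinv : ((n:ℝ)-i)/((n:ℝ)+i+1) = Real.exp (-(Real.log x)) := by
      rw [Real.exp_neg, Real.exp_log (by linarith : (0:ℝ) < x), hx, inv_div]
    rw [hxinv]
    exact Real.exp_lt_exp.mpr (by linarith)
  -- ratio as product
  have hCpos : (0:ℝ) < ((2*n).choose n : ℝ) := by
    exact_mod_cast Nat.choose_pos (by omega)
  have hratio : ((2 * n).choose (n - a) : ℝ) / ((2 * n).choose n) =
      ∏ i ∈ Finset.range a, (((n:ℝ)-i)/((n:ℝ)+i+1)) := by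
    rw [prodId n a han]; field_simp
  -- sum of B
  have hsumB : ∑ i ∈ Finset.range a, B i ≤ (a:ℝ)^2/(n:ℝ) := by
    have e1 : ∑ i ∈ Finset.range a, B i =
        2*(a:ℝ)^2/(2*(n:ℝ)+1) + (a:ℝ)^2*(2*(a:ℝ)^2-1)/(6*D*(2*(n:ℝ)+1)) := by
      rw [hB, Finset.sum_add_distrib]
      rw [← Finset.sum_div, ← Finset.sum_div, ← Finset.mul_sum, sumOdd, sumOddCube]
    rw [e1]
    have hKey : (n:ℝ)*(2*(a:ℝ)^2-1) ≤ 6*D := by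
      rw [hD]; exact keyIneq (n:ℝ) (a:ℝ) hnR haR ha2
    exact finalIneq (n:ℝ) (a:ℝ) D hnR haR hDpos hKey
  -- combine
  have hprod : ∏ i ∈ Finset.range a, Real.exp (-(B i)) <
      ∏ i ∈ Finset.range a, (((n:ℝ)-i)/((n:ℝ)+i+1)) := by
    apply Finset.prod_lt_prod
    · intro i _; positivity
    · intro i hi; exact (factor i hi).le
    · exact ⟨0, Finset.mem_range.mpr (by omega), factor 0 (Finset.mem_range.mpr (by omega))⟩
  have hexp : Real.exp (-((a:ℝ)^2/(n:ℝ))) ≤ ∏ i ∈ Finset.range a, Real.exp (-(B i)) := by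
    rw [← Real.exp_sum]
    apply Real.exp_le_exp.mpr
    rw [Finset.sum_neg_distrib]
    linarith
  rw [hratio]
  calc Real.exp (-((a:ℝ)^2/(n:ℝ))) ≤ _ := hexp
    _ < _ := hprod
end

section
/- For all integers n ≥ 1, 1/C(2n, n) ≤ exp(-(n - 1/2)). -/
lemma key_exp_le_centralBinom : ∀ n : ℕ, 1 ≤ n →
    Real.exp ((n : ℝ) - 1 / 2) ≤ (Nat.centralBinom n : ℝ) := by
  intro n hn
  induction n, hn using Nat.le_induction with
  | base =>
    have h1 : Real.exp ((1 : ℝ) - 1 / 2) * Real.exp ((1 : ℝ) - 1 / 2) = Real.exp 1 := by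
      rw [← Real.exp_add]; norm_num
    have h2 : Real.exp 1 < 2.7182818286 := Real.exp_one_lt_d9
    have h3 : (0 : ℝ) < Real.exp ((1 : ℝ) - 1 / 2) := Real.exp_pos _
    have : (Nat.centralBinom 1 : ℝ) = 2 := by norm_num [Nat.centralBinom]
    rw [this]
    nlinarith
  | succ n hn ih =>
    have hid : ((n + 1 : ℕ) : ℝ) * (Nat.centralBinom (n + 1) : ℝ)
        = 2 * (2 * (n : ℝ) + 1) * (Nat.centralBinom n : ℝ) := by
      have := Nat.succ_mul_centralBinom_succ n
      exact_mod_cast congrArg (Nat.cast : ℕ → ℝ) this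
    have he : Real.exp (((n : ℝ) + 1) - 1 / 2)
        = Real.exp ((n : ℝ) - 1 / 2) * Real.exp 1 := by
      rw [← Real.exp_add]; ring_nf
    have h2 : Real.exp 1 < 2.7182818286 := Real.exp_one_lt_d9
    have hpos : (0 : ℝ) < Real.exp ((n : ℝ) - 1 / 2) := Real.exp_pos _
    have hn1 : (1 : ℝ) ≤ (n : ℝ) := by exact_mod_cast hn
    have hcb : (0 : ℝ) < (Nat.centralBinom n : ℝ) := by
      exact_mod_cast Nat.centralBinom_pos n
    -- (n+1) * exp(n+1-1/2) = (n+1)*exp(n-1/2)*e ≤ 2(2n+1)*exp(n-1/2) ≤ 2(2n+1)*C = (n+1)*C(n+1)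
    have hnp1 : (0 : ℝ) < (n : ℝ) + 1 := by linarith
    rw [Nat.cast_add, Nat.cast_one, he]
    have key : ((n : ℝ) + 1) * (Real.exp ((n : ℝ) - 1 / 2) * Real.exp 1)
        ≤ ((n : ℝ) + 1) * (Nat.centralBinom (n + 1) : ℝ) := by
      have h4 : ((n : ℝ) + 1) * Real.exp 1 ≤ 2 * (2 * (n : ℝ) + 1) := by nlinarith
      calc ((n : ℝ) + 1) * (Real.exp ((n : ℝ) - 1 / 2) * Real.exp 1)
          ≤ 2 * (2 * (n : ℝ) + 1) * Real.exp ((n : ℝ) - 1 / 2) := by nlinarith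
        _ ≤ 2 * (2 * (n : ℝ) + 1) * (Nat.centralBinom n : ℝ) := by nlinarith
        _ = ((n : ℝ) + 1) * (Nat.centralBinom (n + 1) : ℝ) := by
            rw [← hid]; push_cast; ring
    exact le_of_mul_le_mul_left key hnp1

theorem stmt2 (n : ℕ) (hn : 1 ≤ n) :
    (1 : ℝ) / ((2 * n).choose n) ≤ Real.exp (-((n : ℝ) - 1 / 2)) := by
  have h := key_exp_le_centralBinom n hn
  have hcb : (0 : ℝ) < ((2 * n).choose n : ℝ) := by
    exact_mod_cast Nat.centralBinom_pos n
  have : Nat.centralBinom n = (2 * n).choose n := rfl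
  rw [this] at h
  rw [div_le_iff₀ hcb]
  calc (1 : ℝ) = Real.exp (-((n : ℝ) - 1 / 2)) * Real.exp ((n : ℝ) - 1 / 2) := by
        rw [← Real.exp_add]; norm_num
    _ ≤ _ := mul_le_mul_of_nonneg_left h (Real.exp_pos _).le
end

section
/- For all integers n ≥ 4 and integers a with 1 ≤ a ≤ n-1, the quantity I₃ := 1/(6n) - 1/(12(n-a)) - 1/(12(n+a)) + (1/360)·(1/(n-a)³ + 1/(n+a)³) is strictly negative. -/
set_option maxHeartbeats 1000000 in

lemma stmt6_aux (N A : ℝ) (hN : 4 ≤ N) (hA : 1 ≤ A) (hAn : A ≤ N - 1) :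
    1 / (6 * N) - 1 / (12 * (N - A)) - 1 / (12 * (N + A)) +
        (1 / 360) * (1 / (N - A) ^ 3 + 1 / (N + A) ^ 3) < 0 := by
  have hx0 : (0:ℝ) < N - A := by linarith
  have hy0 : (0:ℝ) < N + A := by linarith
  have hN0 : (0:ℝ) < N := by linarith
  have hD : (0:ℝ) < 360 * N * (N - A) ^ 3 * (N + A) ^ 3 := by positivity
  have key : (1 / (6 * N) - 1 / (12 * (N - A)) - 1 / (12 * (N + A)) +
      (1 / 360) * (1 / (N - A) ^ 3 + 1 / (N + A) ^ 3)) * (360 * N * (N - A) ^ 3 * (N + A) ^ 3)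
      = -60 * A ^ 2 * (N - A) ^ 2 * (N + A) ^ 2 + N * ((N - A) ^ 3 + (N + A) ^ 3) := by
    field_simp
    ring
  have h2 : -60 * A ^ 2 * (N - A) ^ 2 * (N + A) ^ 2 + N * ((N - A) ^ 3 + (N + A) ^ 3) < 0 := by
    have ht : N - 1 ≤ A * (N - A) := by
      nlinarith [mul_nonneg (sub_nonneg.2 hA) (by linarith : (0:ℝ) ≤ N - 1 - A)]
    have h3 : (N - 1) ^ 2 ≤ A ^ 2 * (N - A) ^ 2 := by nlinarith
    have h4 : N ^ 2 ≤ (N + A) ^ 2 := by nlinarith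
    have h5 : (N - 1) ^ 2 * N ^ 2 ≤ A ^ 2 * (N - A) ^ 2 * (N + A) ^ 2 :=
      mul_le_mul h3 h4 (by positivity) (by positivity)
    have hA2 : A ^ 2 ≤ (N - 1) ^ 2 := by nlinarith
    have h6 : N ^ 2 ≤ 9 * (N - 1) ^ 2 := by nlinarith
    nlinarith [h5, mul_le_mul_of_nonneg_left hA2 (by positivity : (0:ℝ) ≤ 6 * N ^ 2),
      mul_le_mul_of_nonneg_left h6 (sq_nonneg N)]
  by_contra h'
  push_neg at h'
  have h7 := mul_nonneg h' hD.le
  rw [key] at h7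
  linarith

theorem stmt6 (n a : ℕ) (hn : 4 ≤ n) (ha1 : 1 ≤ a) (ha : a ≤ n - 1) :
    1 / (6 * (n : ℝ)) - 1 / (12 * ((n : ℝ) - a)) - 1 / (12 * ((n : ℝ) + a)) +
        (1 / 360) * (1 / ((n : ℝ) - a) ^ 3 + 1 / ((n : ℝ) + a) ^ 3) < 0 := by
  apply stmt6_aux
  · exact_mod_cast hn
  · exact_mod_cast ha1
  · have h : a + 1 ≤ n := by omega
    have := (Nat.cast_le (α := ℝ)).2 h
    push_cast at this; linarith
end

section
/- For all integers n ≥ 31 and integers a with 1 ≤ a ≤ ⌊√(2n)⌋, the quantity K₂ := a²/(64n²) + 1/(6n) - 1/(180n³) - 1/(12(n+a)) - 1/(12(n-a)) is strictly positive. -/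
theorem stmt7 (n a : ℕ) (hn : 31 ≤ n) (ha1 : 1 ≤ a) (ha : a ≤ Nat.sqrt (2 * n)) :
    0 < (a : ℝ) ^ 2 / (64 * (n : ℝ) ^ 2) + 1 / (6 * (n : ℝ)) - 1 / (180 * (n : ℝ) ^ 3)
        - 1 / (12 * ((n : ℝ) + a)) - 1 / (12 * ((n : ℝ) - a)) := by
  have h2 : a ^ 2 ≤ 2 * n := Nat.le_sqrt'.mp ha
  have hA2 : (a : ℝ) ^ 2 ≤ 2 * (n : ℝ) := by exact_mod_cast h2
  have hN : (31 : ℝ) ≤ (n : ℝ) := by exact_mod_cast hn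
  have hA1 : (1 : ℝ) ≤ (a : ℝ) := by exact_mod_cast ha1
  have hAN : (a : ℝ) < (n : ℝ) := by nlinarith
  set A := (a : ℝ)
  set N := (n : ℝ)
  have hN0 : (0 : ℝ) < N := by linarith
  have hsub : (0 : ℝ) < N - A := by linarith
  have hadd : (0 : ℝ) < N + A := by linarith
  have hD : (0 : ℝ) < 2880 * N ^ 3 * (N + A) * (N - A) := by positivity
  have key : A ^ 2 / (64 * N ^ 2) + 1 / (6 * N) - 1 / (180 * N ^ 3)
        - 1 / (12 * (N + A)) - 1 / (12 * (N - A))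
      = (45 * A ^ 2 * N ^ 3 - 45 * A ^ 4 * N - 480 * A ^ 2 * N ^ 2 - 16 * N ^ 2 + 16 * A ^ 2)
        / (2880 * N ^ 3 * (N + A) * (N - A)) := by
    field_simp
    ring
  rw [key]
  apply div_pos _ hD
  nlinarith [mul_nonneg (mul_nonneg (sq_nonneg A) hN0.le) (sub_nonneg.mpr hA2),
    mul_le_mul_of_nonneg_right hA2 (sq_nonneg N), sq_nonneg (A - 1),
    mul_nonneg (sub_nonneg.mpr (by nlinarith : 1 ≤ A ^ 2)) (by nlinarith : (0:ℝ) ≤ 45 * N ^ 3 - 570 * N ^ 2)]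
end

section
/- For all integers n ≥ 1 and all integers a with 1 ≤ a ≤ n, the ratio C(2n, n-a)/C(2n, n) is at most (e/2)·exp(-a²/n), with equality when n = 1 and a = 1. -/
lemma mono_aux (f f' : ℝ → ℝ) (u : ℝ) (hu : 0 ≤ u)
    (hderiv : ∀ x ∈ Set.Icc (0:ℝ) u, HasDerivAt f (f' x) x)
    (hpos : ∀ x ∈ Set.Icc (0:ℝ) u, 0 ≤ f' x) : f 0 ≤ f u := by
  have hmono : MonotoneOn f (Set.Icc (0:ℝ) u) := by
    apply monotoneOn_of_deriv_nonneg (convex_Icc _ _)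
    · exact fun x hx => (hderiv x hx).continuousAt.continuousWithinAt
    · intro x hx
      rw [interior_Icc] at hx
      exact ((hderiv x (Set.mem_Icc_of_Ioo hx)).differentiableAt).differentiableWithinAt
    · intro x hx
      rw [interior_Icc] at hx
      rw [(hderiv x (Set.mem_Icc_of_Ioo hx)).deriv]
      exact hpos x (Set.mem_Icc_of_Ioo hx)
  exact hmono (Set.left_mem_Icc.2 hu) (Set.right_mem_Icc.2 hu) hu

lemma log_lb1 (u : ℝ) (h0 : 0 ≤ u) :
    u - u^2/2 + u^3/3 - u^4/4 ≤ Real.log (1+u) := by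
  have h := mono_aux (fun x => Real.log (1+x) - (x - x^2/2 + x^3/3 - x^4/4))
      (fun x => x^4/(1+x)) u h0 ?_ ?_
  · simpa using h
  · intro x hx
    have hx0 : 0 ≤ x := hx.1
    have h1 : (0:ℝ) < 1 + x := by linarith
    have hlog : HasDerivAt (fun x : ℝ => Real.log (1+x)) (1/(1+x)) x := by
      simpa [Function.comp_def] using (Real.hasDerivAt_log h1.ne').comp x ((hasDerivAt_id x).const_add 1)
    have hpoly : HasDerivAt (fun x : ℝ => x - x^2/2 + x^3/3 - x^4/4)
        (1 - x + x^2 - x^3) x := by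
      have := (((hasDerivAt_id x).sub ((hasDerivAt_pow 2 x).div_const 2)).add
        ((hasDerivAt_pow 3 x).div_const 3)).sub ((hasDerivAt_pow 4 x).div_const 4)
      refine this.congr_deriv ?_
      ring
    have := hlog.sub hpoly
    refine this.congr_deriv ?_
    field_simp
    ring
  · intro x hx
    have : (0:ℝ) < 1 + x := by linarith [hx.1]
    positivity

lemma log_lb2 (u : ℝ) (h0 : 0 ≤ u) (h1 : u < 1) :
    u + u^2/2 + u^3/3 + u^4/4 ≤ -Real.log (1-u) := by
  have h := mono_aux (fun x => -Real.log (1-x) - (x + x^2/2 + x^3/3 + x^4/4))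
      (fun x => x^4/(1-x)) u h0 ?_ ?_
  · simpa using h
  · intro x hx
    have hx1 : x < 1 := lt_of_le_of_lt hx.2 h1
    have hp : (0:ℝ) < 1 - x := by linarith
    have hlog : HasDerivAt (fun x : ℝ => -Real.log (1-x)) (1/(1-x)) x := by
      have := ((Real.hasDerivAt_log hp.ne').comp x
        (((hasDerivAt_id x).neg).const_add 1)).neg
      refine this.congr_deriv ?_
      field_simp
    have hpoly : HasDerivAt (fun x : ℝ => x + x^2/2 + x^3/3 + x^4/4)
        (1 + x + x^2 + x^3) x := by
      have := (((hasDerivAt_id x).add ((hasDerivAt_pow 2 x).div_const 2)).add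
        ((hasDerivAt_pow 3 x).div_const 3)).add ((hasDerivAt_pow 4 x).div_const 4)
      refine this.congr_deriv ?_
      ring
    have := hlog.sub hpoly
    refine this.congr_deriv ?_
    field_simp
    ring
  · intro x hx
    have hx1 : x < 1 := lt_of_le_of_lt hx.2 h1
    have : (0:ℝ) < 1 - x := by linarith
    positivity

lemma key_exp (u : ℝ) (h0 : 0 ≤ u) (h1 : u < 1) :
    Real.exp (2*u + 2*u^3/3) ≤ (1+u)/(1-u) := by
  have hp1 : (0:ℝ) < 1 + u := by linarith
  have hp2 : (0:ℝ) < 1 - u := by linarith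
  have hlog : 2*u + 2*u^3/3 ≤ Real.log ((1+u)/(1-u)) := by
    rw [Real.log_div hp1.ne' hp2.ne']
    have := log_lb1 u h0
    have := log_lb2 u h0 h1
    linarith
  calc Real.exp (2*u + 2*u^3/3) ≤ Real.exp (Real.log ((1+u)/(1-u))) :=
        Real.exp_le_exp.2 hlog
    _ = (1+u)/(1-u) := Real.exp_log (by positivity)

lemma main_ind (n : ℕ) (hn : 1 ≤ n) : ∀ a : ℕ, a ≤ n →
    ((2*n).choose (n-a) : ℝ) *
      Real.exp (2*(a:ℝ)^2/(2*(n:ℝ)+1) + 2/3*((a:ℝ)^2*(2*(a:ℝ)^2-1))/(2*(n:ℝ)+1)^3)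
      ≤ ((2*n).choose n : ℝ) := by
  intro a
  induction a with
  | zero => intro _; norm_num
  | succ a ih =>
    intro hsucc
    have ha : a ≤ n := le_of_lt (Nat.lt_of_succ_le hsucc)
    have IH := ih ha
    have hN0 : (0:ℝ) < 2*(n:ℝ)+1 := by positivity
    have hsr : (a:ℝ) + 1 ≤ (n:ℝ) := by exact_mod_cast hsucc
    have hna1 : (0:ℝ) < (n:ℝ)+(a:ℝ)+1 := by positivity
    have hna2 : (0:ℝ) < (n:ℝ)-(a:ℝ) := by linarith
    -- choose recurrence
    have hnat : (2*n).choose (n-a) * (n-a) = (2*n).choose (n-(a+1)) * (n+a+1) := by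
      have h := Nat.choose_succ_right_eq (2*n) (n-(a+1))
      have e1 : n-(a+1)+1 = n-a := by omega
      have e2 : 2*n - (n-(a+1)) = n+a+1 := by omega
      rw [e1, e2] at h
      exact h
    have hreal : ((2*n).choose (n-(a+1)) : ℝ) =
        ((2*n).choose (n-a) : ℝ) * (((n:ℝ)-(a:ℝ)) / ((n:ℝ)+(a:ℝ)+1)) := by
      rw [mul_div_assoc', eq_div_iff hna1.ne']
      have := congrArg (fun x : ℕ => (x:ℝ)) hnat
      push_cast [Nat.cast_sub ha] at this
      linarith [this]
    set u : ℝ := (2*(a:ℝ)+1)/(2*(n:ℝ)+1) with hu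
    have hu0 : 0 ≤ u := by positivity
    have hu1 : u < 1 := by
      rw [hu, div_lt_one hN0]; linarith
    have h1u : (0:ℝ) < 1 - u := by linarith
    have h1u' : (0:ℝ) < 1 + u := by linarith
    have hE : 2*((a:ℝ)+1)^2/(2*(n:ℝ)+1) + 2/3*(((a:ℝ)+1)^2*(2*((a:ℝ)+1)^2-1))/(2*(n:ℝ)+1)^3 =
        (2*(a:ℝ)^2/(2*(n:ℝ)+1) + 2/3*((a:ℝ)^2*(2*(a:ℝ)^2-1))/(2*(n:ℝ)+1)^3) + (2*u + 2*u^3/3) := by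
      rw [hu]; field_simp; ring
    have hkey := key_exp u hu0 hu1
    have hprod : ((n:ℝ)-(a:ℝ))*(1+u) = ((n:ℝ)+(a:ℝ)+1)*(1-u) := by
      rw [hu]; field_simp; ring
    have hfrac : ((n:ℝ)-(a:ℝ)) / ((n:ℝ)+(a:ℝ)+1) * ((1+u)/(1-u)) = 1 := by
      have hne : ((n:ℝ)+(a:ℝ)+1) * (1-u) ≠ 0 := by positivity
      rw [div_mul_div_comm, div_eq_one_iff_eq hne]
      linear_combination hprod
    have hstep : ((n:ℝ)-(a:ℝ)) / ((n:ℝ)+(a:ℝ)+1) * Real.exp (2*u + 2*u^3/3) ≤ 1 := by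
      calc ((n:ℝ)-(a:ℝ)) / ((n:ℝ)+(a:ℝ)+1) * Real.exp (2*u + 2*u^3/3)
          ≤ ((n:ℝ)-(a:ℝ)) / ((n:ℝ)+(a:ℝ)+1) * ((1+u)/(1-u)) := by
            apply mul_le_mul_of_nonneg_left hkey (by positivity)
        _ = 1 := hfrac
    push_cast
    rw [hreal, hE, Real.exp_add]
    calc ((2*n).choose (n-a) : ℝ) * (((n:ℝ)-(a:ℝ)) / ((n:ℝ)+(a:ℝ)+1)) *
          (Real.exp (2*(a:ℝ)^2/(2*(n:ℝ)+1) + 2/3*((a:ℝ)^2*(2*(a:ℝ)^2-1))/(2*(n:ℝ)+1)^3) *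
            Real.exp (2*u + 2*u^3/3))
        = (((2*n).choose (n-a) : ℝ) *
            Real.exp (2*(a:ℝ)^2/(2*(n:ℝ)+1) + 2/3*((a:ℝ)^2*(2*(a:ℝ)^2-1))/(2*(n:ℝ)+1)^3)) *
          (((n:ℝ)-(a:ℝ)) / ((n:ℝ)+(a:ℝ)+1) * Real.exp (2*u + 2*u^3/3)) := by ring
      _ ≤ (((2*n).choose (n-a) : ℝ) *
            Real.exp (2*(a:ℝ)^2/(2*(n:ℝ)+1) + 2/3*((a:ℝ)^2*(2*(a:ℝ)^2-1))/(2*(n:ℝ)+1)^3)) * 1 := by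
            apply mul_le_mul_of_nonneg_left hstep (by positivity)
      _ = ((2*n).choose (n-a) : ℝ) *
            Real.exp (2*(a:ℝ)^2/(2*(n:ℝ)+1) + 2/3*((a:ℝ)^2*(2*(a:ℝ)^2-1))/(2*(n:ℝ)+1)^3) := by ring
      _ ≤ ((2*n).choose n : ℝ) := IH

lemma numeric (n a : ℝ) (hn : 2 ≤ n) (ha : 1 ≤ a) (han : a ≤ n) :
    a^2/n ≤ 2*a^2/(2*n+1) + 2/3*(a^2*(2*a^2-1))/(2*n+1)^3 + (1 - Real.log 2) := by
  have hlog : Real.log 2 < 0.6931471808 := Real.log_two_lt_d9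
  have hn0 : (0:ℝ) < n := by linarith
  have hN0 : (0:ℝ) < 2*n+1 := by linarith
  have expand : a^2/n - 2*a^2/(2*n+1) - 2/3*(a^2*(2*a^2-1))/(2*n+1)^3
      = (3*a^2*(2*n+1)^2 - 2*n*a^2*(2*a^2-1)) / (3*n*(2*n+1)^3) := by
    field_simp; ring
  have key : 3*a^2*(2*n+1)^2 - 2*n*a^2*(2*a^2-1) ≤ 0.3068528192 * (3*n*(2*n+1)^3) := by
    have hP : (3*(2*n+1)^2 + 2*n)^2 ≤ 48 * 0.3068528192 * n^2 * (2*n+1)^3 := by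
      nlinarith [sq_nonneg (n-2), sq_nonneg n, mul_pos hn0 hn0]
    nlinarith [sq_nonneg (8*n*a^2 - (3*(2*n+1)^2 + 2*n)), hP, hn0]
  have h2 : a^2/n - 2*a^2/(2*n+1) - 2/3*(a^2*(2*a^2-1))/(2*n+1)^3 ≤ 0.3068528192 := by
    rw [expand, div_le_iff₀ (by positivity)]
    exact key
  linarith

theorem stmt9 :
    (∀ n a : ℕ, 1 ≤ n → 1 ≤ a → a ≤ n →
        ((2 * n).choose (n - a) : ℝ) / ((2 * n).choose n) ≤
          (Real.exp 1 / 2) * Real.exp (-((a : ℝ) ^ 2 / n))) ∧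
      ((2 * 1).choose (1 - 1) : ℝ) / ((2 * 1).choose 1) =
        (Real.exp 1 / 2) * Real.exp (-(((1 : ℕ) : ℝ) ^ 2 / ((1 : ℕ) : ℝ))) := by
  have heq1 : ((2 * 1).choose (1 - 1) : ℝ) / ((2 * 1).choose 1) =
      (Real.exp 1 / 2) * Real.exp (-(((1 : ℕ) : ℝ) ^ 2 / ((1 : ℕ) : ℝ))) := by
    norm_num
    rw [div_mul_eq_mul_div, ← Real.exp_add]
    norm_num
  constructor
  · intro n a hn ha han
    have hCn : (0:ℝ) < ((2*n).choose n : ℝ) := by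
      exact_mod_cast Nat.choose_pos (by omega)
    rcases eq_or_lt_of_le hn with h1 | h2
    · -- n = 1, hence a = 1
      have hn1 : n = 1 := h1.symm
      have ha1 : a = 1 := by omega
      subst hn1; subst ha1
      exact le_of_eq heq1
    · -- n ≥ 2
      have hn2 : 2 ≤ n := h2
      have hind := main_ind n hn a han
      set E : ℝ := 2*(a:ℝ)^2/(2*(n:ℝ)+1) + 2/3*((a:ℝ)^2*(2*(a:ℝ)^2-1))/(2*(n:ℝ)+1)^3 with hE
      have hexp : Real.exp (-E) ≤ (Real.exp 1 / 2) * Real.exp (-((a : ℝ) ^ 2 / n)) := by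
        have he2 : (Real.exp 1 / 2) * Real.exp (-((a : ℝ) ^ 2 / n)) =
            Real.exp (1 - Real.log 2 - (a:ℝ)^2/n) := by
          rw [show (1 : ℝ) - Real.log 2 - (a:ℝ)^2/n = (1 - Real.log 2) + (-((a:ℝ)^2/n)) by ring,
            Real.exp_add, Real.exp_sub, Real.exp_log two_pos]
        rw [he2]
        apply Real.exp_le_exp.2
        have hnum := numeric (n:ℝ) (a:ℝ) (by exact_mod_cast hn2) (by exact_mod_cast ha)
          (by exact_mod_cast han)
        rw [hE]
        linarith
      calc ((2 * n).choose (n - a) : ℝ) / ((2 * n).choose n)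
          ≤ Real.exp (-E) := by
            rw [div_le_iff₀ hCn, Real.exp_neg, inv_mul_eq_div,
              le_div_iff₀ (Real.exp_pos E)]
            exact hind
        _ ≤ (Real.exp 1 / 2) * Real.exp (-((a : ℝ) ^ 2 / n)) := hexp
  · exact heq1
end

section
/- For all integers n ≥ 5 and all integers a with 1 ≤ a ≤ n, C(2n, n-a)/C(2n, n) ≤ 1.084315·exp(-a²/n). -/
set_option maxHeartbeats 1000000 in
lemma dkw_lemA (x : ℝ) (hx : 0 ≤ x) :
    Real.exp (x - x^2/2 + x^3/3 - x^4/4) ≤ 1 + x := by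
  set f : ℝ → ℝ := fun t => (1+t) * Real.exp (-(t - t^2/2 + t^3/3 - t^4/4)) with hf
  have hderiv : ∀ t : ℝ, HasDerivAt f (Real.exp (-(t - t^2/2 + t^3/3 - t^4/4)) * t^4) t := by
    intro t
    have h0 : HasDerivAt (fun t : ℝ => t - t^2/2 + t^3/3 - t^4/4) (1 - t + t^2 - t^3) t := by
      have hh := (((hasDerivAt_id t).sub ((hasDerivAt_pow 2 t).div_const 2)).add
        ((hasDerivAt_pow 3 t).div_const 3)).sub ((hasDerivAt_pow 4 t).div_const 4)
      refine hh.congr_deriv ?_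
      ring
    have h2 := (Real.hasDerivAt_exp (-(t - t^2/2 + t^3/3 - t^4/4))).comp t h0.neg
    have h3 := (((hasDerivAt_id t).const_add (1:ℝ)).mul h2)
    refine h3.congr_deriv ?_
    simp only [Function.comp, id, Pi.neg_apply]
    ring
  have hmono : MonotoneOn f (Set.Ici (0:ℝ)) := by
    apply monotoneOn_of_deriv_nonneg (convex_Ici 0)
    · fun_prop
    · intro t ht
      exact (hderiv t).differentiableAt.differentiableWithinAt
    · intro t ht
      rw [(hderiv t).deriv]
      have ht' : (0:ℝ) < t := by simpa using ht
      positivity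
  have h0 : f 0 = 1 := by simp [hf]
  have hx' : (1:ℝ) ≤ f x := by
    rw [← h0]; exact hmono Set.self_mem_Ici (Set.mem_Ici.2 hx) hx
  have hepos := Real.exp_pos (x - x^2/2 + x^3/3 - x^4/4)
  rw [hf] at hx'
  simp only [Real.exp_neg] at hx'
  have := mul_le_mul_of_nonneg_right hx' hepos.le
  rw [mul_assoc, inv_mul_cancel₀ hepos.ne', one_mul, mul_one] at this
  linarith

set_option maxHeartbeats 1000000 in
lemma dkw_lemB (y : ℝ) (hy : 0 ≤ y) :
    1 - y ≤ Real.exp (-(y + y^2/2 + y^3/3 + y^4/4)) := by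
  set g : ℝ → ℝ := fun t => (1-t) * Real.exp (t + t^2/2 + t^3/3 + t^4/4) with hg
  have hderiv : ∀ t : ℝ, HasDerivAt g (-(Real.exp (t + t^2/2 + t^3/3 + t^4/4) * t^4)) t := by
    intro t
    have h0 : HasDerivAt (fun t : ℝ => t + t^2/2 + t^3/3 + t^4/4) (1 + t + t^2 + t^3) t := by
      have hh := ((((hasDerivAt_id t).add ((hasDerivAt_pow 2 t).div_const 2)).add
        ((hasDerivAt_pow 3 t).div_const 3)).add ((hasDerivAt_pow 4 t).div_const 4))
      refine hh.congr_deriv ?_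
      ring
    have h2 := (Real.hasDerivAt_exp (t + t^2/2 + t^3/3 + t^4/4)).comp t h0
    have h3 := (((hasDerivAt_id t).neg.const_add (1:ℝ)).mul h2)
    refine h3.congr_deriv ?_
    simp only [Function.comp, id, Pi.neg_apply]
    ring
  have hmono : AntitoneOn g (Set.Ici (0:ℝ)) := by
    apply antitoneOn_of_deriv_nonpos (convex_Ici 0)
    · fun_prop
    · intro t ht
      exact (hderiv t).differentiableAt.differentiableWithinAt
    · intro t ht
      rw [(hderiv t).deriv]
      have ht' : (0:ℝ) < t := by simpa using ht
      have : (0:ℝ) ≤ Real.exp (t + t^2/2 + t^3/3 + t^4/4) * t^4 := by positivity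
      linarith
  have h0 : g 0 = 1 := by simp [hg]
  have hy' : g y ≤ 1 := by
    rw [← h0]; exact hmono Set.self_mem_Ici (Set.mem_Ici.2 hy) hy
  have hepos := Real.exp_pos (y + y^2/2 + y^3/3 + y^4/4)
  rw [hg] at hy'
  rw [Real.exp_neg, ← mul_le_mul_iff_left₀ hepos, inv_mul_cancel₀ hepos.ne']
  exact hy'

lemma dkw_prod_id (n : ℕ) : ∀ a : ℕ, a ≤ n →
    ((2*n).choose (n-a) : ℝ) = ((2*n).choose n : ℝ) *
      ∏ j ∈ Finset.range a, (((n:ℝ) - j)/((n:ℝ) + j + 1)) := by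
  intro a
  induction a with
  | zero => simp
  | succ a ih =>
    intro ha
    have ha' : a ≤ n := by omega
    have key : (2*n).choose (n-a) * (n-a) = (2*n).choose (n-(a+1)) * (n+a+1) := by
      have h := Nat.choose_succ_right_eq (2*n) (n-(a+1))
      have e1 : n - (a+1) + 1 = n - a := by omega
      have e2 : 2*n - (n - (a+1)) = n + a + 1 := by omega
      rw [e1, e2] at h
      omega
    have keyR : ((2*n).choose (n-a) : ℝ) * ((n:ℝ) - a) =
        ((2*n).choose (n-(a+1)) : ℝ) * ((n:ℝ) + a + 1) := by
      have := congrArg (Nat.cast : ℕ → ℝ) key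
      push_cast [Nat.cast_sub ha'] at this
      convert this using 1
    have hpos : (0:ℝ) < (n:ℝ) + a + 1 := by positivity
    rw [Finset.prod_range_succ, ← mul_assoc, ← ih ha']
    field_simp
    linarith [keyR]

lemma dkw_sum_pq (n : ℝ) (hn : n ≠ 0) (a : ℕ) :
    ∑ j ∈ Finset.range a,
      ((((j:ℝ)+1)/n - (((j:ℝ)+1)/n)^2/2 + (((j:ℝ)+1)/n)^3/3 - (((j:ℝ)+1)/n)^4/4)
        + (((j:ℝ)/n) + ((j:ℝ)/n)^2/2 + ((j:ℝ)/n)^3/3 + ((j:ℝ)/n)^4/4))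
    = (a:ℝ)^2/n - (a:ℝ)^2/(2*n^2) + ((a:ℝ)^4+(a:ℝ)^2)/(6*n^3) - (a:ℝ)^4/(4*n^4) := by
  induction a with
  | zero => simp
  | succ a ih =>
    rw [Finset.sum_range_succ, ih]
    push_cast
    field_simp
    ring

lemma dkw_keyNat (n a : ℕ) (hn : 5 ≤ n) (ha1 : 1 ≤ a) (han : a ≤ n) (hex : ¬(n = 5 ∧ a = 3)) :
    750*a^2*n^2 + 375*a^4 ≤ 108*n^4 + 250*n*a^4 + 250*n*a^2 := by
  by_cases hn7 : 7 ≤ n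
  · have hnr : (7:ℝ) ≤ n := by exact_mod_cast hn7
    have har : (0:ℝ) ≤ a := by positivity
    have key : (750:ℝ)*a^2*n^2 + 375*a^4 ≤ 108*n^4 + 250*n*a^4 + 250*n*a^2 := by
      nlinarith [sq_nonneg (6*(n:ℝ)^2 - 21*(a:ℝ)^2), mul_nonneg (sub_nonneg.2 hnr) (pow_nonneg har 4),
        mul_nonneg (sub_nonneg.2 hnr) (pow_nonneg har 2), sq_nonneg ((a:ℝ)*(n:ℝ)), pow_nonneg har 4]
    exact_mod_cast key
  · have hn6 : n ≤ 6 := by omega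
    interval_cases n <;> interval_cases a <;> simp_all

lemma dkw_exp95 : Real.exp ((9:ℝ)/5) ≤ 6.0646 := by
  have h1 : Real.exp 1 < 2.7182818286 := Real.exp_one_lt_d9
  have h2 : (1.025:ℝ) ≤ Real.exp 0.025 := by linarith [Real.add_one_le_exp (0.025:ℝ)]
  have h3 : Real.exp ((9:ℝ)/5) * Real.exp 0.025 ^ 8 = Real.exp 1 ^ 2 := by
    rw [← Real.exp_nat_mul, ← Real.exp_add, ← Real.exp_nat_mul]
    norm_num
  have hp1 : Real.exp 1 ^ 2 < 2.7182818286^2 := by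
    have := Real.exp_pos 1
    nlinarith
  have hp2 : (1.025:ℝ)^8 ≤ Real.exp 0.025 ^ 8 := by gcongr
  have hE := Real.exp_pos ((9:ℝ)/5)
  nlinarith

theorem stmt10 (n a : ℕ) (hn : 5 ≤ n) (ha1 : 1 ≤ a) (han : a ≤ n) :
    ((2 * n).choose (n - a) : ℝ) / ((2 * n).choose n) ≤
      1.084315 * Real.exp (-((a : ℝ) ^ 2 / n)) := by
  by_cases hex : n = 5 ∧ a = 3
  · obtain ⟨rfl, rfl⟩ := hex
    have hc2 : Nat.choose (2*5) (5-3) = 45 := by decide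
    have hc5 : Nat.choose (2*5) 5 = 252 := by decide
    rw [hc2, hc5]
    have hE := Real.exp_pos ((9:ℝ)/5)
    have h9 : -(((3:ℕ):ℝ)^2/((5:ℕ):ℝ)) = -((9:ℝ)/5) := by norm_num
    rw [h9, Real.exp_neg, ← div_eq_mul_inv, le_div_iff₀ hE]
    nlinarith [dkw_exp95]
  · -- main case
    have hn0 : (0:ℝ) < (n:ℝ) := by positivity
    have hnne : (n:ℝ) ≠ 0 := hn0.ne'
    have hcpos : (0:ℝ) < ((2*n).choose n : ℝ) := by
      exact_mod_cast Nat.choose_pos (by omega : n ≤ 2*n)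
    have hid := dkw_prod_id n a han
    have hLHS : ((2 * n).choose (n - a) : ℝ) / ((2 * n).choose n) =
        ∏ j ∈ Finset.range a, (((n:ℝ) - j)/((n:ℝ) + j + 1)) := by
      rw [hid, mul_comm, mul_div_assoc, div_self hcpos.ne', mul_one]
    -- per-factor bound
    have hfac : ∀ j ∈ Finset.range a, ((n:ℝ) - j)/((n:ℝ) + j + 1) ≤
        Real.exp (-(((((j:ℝ)+1)/n - (((j:ℝ)+1)/n)^2/2 + (((j:ℝ)+1)/n)^3/3 - (((j:ℝ)+1)/n)^4/4)
          + (((j:ℝ)/n) + ((j:ℝ)/n)^2/2 + ((j:ℝ)/n)^3/3 + ((j:ℝ)/n)^4/4)))) := by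
      intro j hj
      have hjn : (j:ℝ) < n := by
        have : j < n := by
          have := Finset.mem_range.1 hj; omega
        exact_mod_cast this
      set x : ℝ := ((j:ℝ)+1)/n with hxdef
      set y : ℝ := (j:ℝ)/n with hydef
      have hx0 : 0 ≤ x := by positivity
      have hy0 : 0 ≤ y := by positivity
      have hA := dkw_lemA x hx0
      have hB := dkw_lemB y hy0
      have hnj : ((n:ℝ) + j + 1) ≠ 0 := by positivity
      have hfrac : ((n:ℝ) - j)/((n:ℝ) + j + 1) = (1 - y)/(1 + x) := by
        have e1 : 1 - y = ((n:ℝ) - j)/n := by rw [hydef]; field_simp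
        have e2 : 1 + x = ((n:ℝ) + j + 1)/n := by rw [hxdef]; field_simp; ring
        rw [e1, e2]; field_simp
      rw [hfrac]
      have hd : (1 - y)/(1 + x) ≤
          Real.exp (-(y + y^2/2 + y^3/3 + y^4/4)) / Real.exp (x - x^2/2 + x^3/3 - x^4/4) :=
        div_le_div₀ (Real.exp_pos _).le hB (Real.exp_pos _) hA
      calc (1 - y)/(1 + x) ≤ _ := hd
        _ = _ := by
          rw [← Real.exp_sub]
          congr 1
          ring
    have hnonneg : ∀ j ∈ Finset.range a, (0:ℝ) ≤ ((n:ℝ) - j)/((n:ℝ) + j + 1) := by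
      intro j hj
      have hjn : (j:ℝ) < n := by
        have : j < n := by
          have := Finset.mem_range.1 hj; omega
        exact_mod_cast this
      have h1 : (0:ℝ) ≤ (n:ℝ) - j := by linarith
      have h2 : (0:ℝ) < (n:ℝ) + j + 1 := by positivity
      positivity
    have hprod := Finset.prod_le_prod hnonneg hfac
    rw [← Real.exp_sum, Finset.sum_neg_distrib, dkw_sum_pq (n:ℝ) hnne a] at hprod
    rw [hLHS]
    have hkeyR : (750:ℝ)*a^2*n^2 + 375*a^4 ≤ 108*n^4 + 250*n*a^4 + 250*n*a^2 := by
      exact_mod_cast dkw_keyNat n a hn ha1 han hex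
    have hEb : (a:ℝ)^2/(2*(n:ℝ)^2) - ((a:ℝ)^4+(a:ℝ)^2)/(6*(n:ℝ)^3) + (a:ℝ)^4/(4*(n:ℝ)^4)
        ≤ 9/125 := by
      have h1500 : (0:ℝ) < 1500*(n:ℝ)^4 := by positivity
      rw [show (a:ℝ)^2/(2*(n:ℝ)^2) - ((a:ℝ)^4+(a:ℝ)^2)/(6*(n:ℝ)^3) + (a:ℝ)^4/(4*(n:ℝ)^4)
          = (750*(a:ℝ)^2*(n:ℝ)^2 - 250*(n:ℝ)*(a:ℝ)^4 - 250*(n:ℝ)*(a:ℝ)^2 + 375*(a:ℝ)^4)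
            /(1500*(n:ℝ)^4) from by field_simp; ring, div_le_iff₀ h1500]
      linarith
    have hcexp : Real.exp ((9:ℝ)/125) ≤ 1.084315 := by
      have h1 := Real.add_one_le_exp (-(9/125):ℝ)
      rw [Real.exp_neg] at h1
      have h2 := Real.exp_pos ((9:ℝ)/125)
      have h3 := mul_inv_cancel₀ h2.ne'
      nlinarith
    calc ∏ j ∈ Finset.range a, (((n:ℝ) - j)/((n:ℝ) + j + 1))
        ≤ Real.exp (-((a:ℝ)^2/n - (a:ℝ)^2/(2*(n:ℝ)^2) + ((a:ℝ)^4+(a:ℝ)^2)/(6*(n:ℝ)^3)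
            - (a:ℝ)^4/(4*(n:ℝ)^4))) := hprod
      _ = Real.exp ((a:ℝ)^2/(2*(n:ℝ)^2) - ((a:ℝ)^4+(a:ℝ)^2)/(6*(n:ℝ)^3) + (a:ℝ)^4/(4*(n:ℝ)^4))
            * Real.exp (-((a:ℝ)^2/n)) := by
          rw [← Real.exp_add]
          congr 1
          ring
      _ ≤ 1.084315 * Real.exp (-((a:ℝ)^2/n)) := by
          apply mul_le_mul_of_nonneg_right _ (Real.exp_pos _).le
          exact (Real.exp_le_exp.2 hEb).trans hcexp
end

section
/- Under the null hypothesis that X₁,…,X_n and Y₁,…,Y_n are i.i.d. from a common continuous distribution function F, the one-sided two-sample Kolmogorov–Smirnov statistic satisfies P(√(n²/(2n))·sup_x(F_n(x) - G_n(x)) ≥ √(n²/(2n))·(a/n)) = C(2n, n-a)/C(2n, n) for a = 1, 2, …, n. -/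
open MeasureTheory Finset Function
open scoped ENNReal

namespace GK


variable {N : ℕ}

/-- number of elements of `A` with value `< k` -/
def cnt (A : Finset (Fin N)) (k : ℕ) : ℕ := (A.filter (fun m => m.val < k)).card

lemma cnt_zero (A : Finset (Fin N)) : cnt A 0 = 0 := by
  simp [cnt]

lemma cnt_mono (A : Finset (Fin N)) {k l : ℕ} (h : k ≤ l) : cnt A k ≤ cnt A l := by
  apply Finset.card_le_card
  apply Finset.monotone_filter_right
  intro m hm
  omega

lemma cnt_le (A : Finset (Fin N)) (k : ℕ) : cnt A k ≤ k := by
  classical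
  have h1 : cnt A k = ((A.filter (fun m => m.val < k)).image Fin.val).card := by
    rw [Finset.card_image_of_injective _ Fin.val_injective]; rfl
  rw [h1]
  have hsub : (A.filter (fun m => m.val < k)).image Fin.val ⊆ Finset.range k := by
    intro x hx
    simp only [Finset.mem_image, Finset.mem_filter] at hx
    obtain ⟨m, ⟨_, hm⟩, rfl⟩ := hx
    simpa using hm
  simpa using Finset.card_le_card hsub

lemma cnt_eq_card (A : Finset (Fin N)) {k : ℕ} (h : N ≤ k) : cnt A k = A.card := by
  unfold cnt
  rw [Finset.filter_true_of_mem]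
  intro m _
  exact lt_of_lt_of_le m.isLt h

lemma cnt_succ_le (A : Finset (Fin N)) (k : ℕ) : cnt A (k + 1) ≤ cnt A k + 1 := by
  classical
  have hsub : A.filter (fun m => m.val < k + 1) ⊆
      A.filter (fun m => m.val < k) ∪ univ.filter (fun m : Fin N => m.val = k) := by
    intro m hm
    simp only [Finset.mem_filter] at hm
    simp only [Finset.mem_union, Finset.mem_filter, Finset.mem_univ, true_and]
    rcases Nat.lt_succ_iff_lt_or_eq.mp hm.2 with h | h
    · exact Or.inl ⟨hm.1, h⟩
    · exact Or.inr h
  have h2 := Finset.card_union_le (A.filter fun m => m.val < k)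
    (univ.filter fun m : Fin N => m.val = k)
  have h3 : (univ.filter (fun m : Fin N => m.val = k)).card ≤ 1 := by
    apply Finset.card_le_one.2
    intro x hx y hy
    simp only [Finset.mem_filter] at hx hy
    exact Fin.val_injective (hx.2.trans hy.2.symm)
  have h4 := Finset.card_le_card hsub
  unfold cnt
  omega

lemma cnt_add_sep (A : Finset (Fin N)) {t k : ℕ} (h : t ≤ k) :
    cnt A k = cnt A t + (A.filter (fun m => t ≤ m.val ∧ m.val < k)).card := by
  classical
  unfold cnt
  rw [← Finset.card_filter_add_card_filter_not (s := A.filter (fun m => m.val < k))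
    (p := fun m => m.val < t)]
  congr 1
  · congr 1
    rw [Finset.filter_filter]
    ext m
    simp only [Finset.mem_filter]
    exact and_congr_right fun _ => by omega
  · congr 1
    rw [Finset.filter_filter]
    ext m
    simp only [Finset.mem_filter]
    exact and_congr_right fun _ => by omega

/-- flip membership from position `t` on -/
def reflAt (t : ℕ) (A : Finset (Fin N)) : Finset (Fin N) :=
  A.filter (fun m => m.val < t) ∪ Aᶜ.filter (fun m => t ≤ m.val)

lemma mem_reflAt {t : ℕ} {A : Finset (Fin N)} {m : Fin N} :
    m ∈ reflAt t A ↔ ((m.val < t ∧ m ∈ A) ∨ (t ≤ m.val ∧ m ∉ A)) := by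
  simp only [reflAt, Finset.mem_union, Finset.mem_filter, Finset.mem_compl]
  tauto

lemma reflAt_reflAt (t : ℕ) (A : Finset (Fin N)) : reflAt t (reflAt t A) = A := by
  ext m
  by_cases h : m.val < t
  · simp [mem_reflAt, h, not_le.mpr h]
  · simp [mem_reflAt, h, not_lt.mp h]

lemma cnt_reflAt_of_le {t k : ℕ} (h : k ≤ t) (A : Finset (Fin N)) :
    cnt (reflAt t A) k = cnt A k := by
  unfold cnt
  congr 1
  ext m
  simp only [Finset.mem_filter, mem_reflAt]
  constructor
  · rintro ⟨h1 | h1, h2⟩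
    · exact ⟨h1.2, h2⟩
    · omega
  · intro hm
    exact ⟨Or.inl ⟨lt_of_lt_of_le hm.2 h, hm.1⟩, hm.2⟩

lemma mid_card_add (A : Finset (Fin N)) (t k : ℕ) :
    ((reflAt t A).filter (fun m => t ≤ m.val ∧ m.val < k)).card
      + (A.filter (fun m => t ≤ m.val ∧ m.val < k)).card
    = ((univ : Finset (Fin N)).filter (fun m => t ≤ m.val ∧ m.val < k)).card := by
  classical
  have e1 : ((univ : Finset (Fin N)).filter (fun m => t ≤ m.val ∧ m.val < k)).filter
      (fun m => m ∈ A) = A.filter (fun m => t ≤ m.val ∧ m.val < k) := by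
    ext m
    simp only [Finset.mem_filter, Finset.mem_univ, true_and]
    tauto
  have e2 : ((univ : Finset (Fin N)).filter (fun m => t ≤ m.val ∧ m.val < k)).filter
      (fun m => m ∉ A) = (reflAt t A).filter (fun m => t ≤ m.val ∧ m.val < k) := by
    ext m
    simp only [Finset.mem_filter, Finset.mem_univ, true_and, mem_reflAt]
    constructor
    · rintro ⟨⟨h1, h2⟩, h3⟩
      exact ⟨Or.inr ⟨h1, h3⟩, h1, h2⟩
    · rintro ⟨h1 | h1, h3⟩
      · omega
      · exact ⟨⟨h3.1, h3.2⟩, h1.2⟩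
  rw [← Finset.card_filter_add_card_filter_not
      (s := (univ : Finset (Fin N)).filter (fun m => t ≤ m.val ∧ m.val < k))
      (p := fun m => m ∈ A), e1, e2, Nat.add_comm]

lemma card_filter_Ico (t k : ℕ) (hk : k ≤ N) (ht : t ≤ k) :
    ((univ : Finset (Fin N)).filter (fun m => t ≤ m.val ∧ m.val < k)).card = k - t := by
  classical
  rw [← Nat.card_Ico t k]
  apply Finset.card_nbij (i := Fin.val)
  · intro m hm
    simp only [Finset.mem_coe, Finset.mem_filter, Finset.mem_univ, true_and] at hm
    simp [Finset.mem_Ico, hm.1, hm.2]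
  · intro x hx y hy hxy
    exact Fin.val_injective hxy
  · intro x hx
    simp only [Finset.coe_filter, Finset.mem_Ico, Finset.coe_Ico, Set.mem_Ico] at hx ⊢
    refine ⟨⟨x, lt_of_lt_of_le hx.2 hk⟩, ?_, rfl⟩
    simpa using hx

lemma card_filter_lt (k : ℕ) (hk : k ≤ N) :
    ((univ : Finset (Fin N)).filter (fun m : Fin N => m.val < k)).card = k := by
  classical
  have h := card_filter_Ico (N := N) 0 k hk (Nat.zero_le _)
  simp only [Nat.zero_le, true_and, Nat.sub_zero] at h
  exact h

/-- good sets: some prefix has excess at least `a` -/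
def Good (a : ℕ) (A : Finset (Fin N)) : Prop := ∃ k, k ≤ N ∧ k + a ≤ 2 * cnt A k

open scoped Classical in
noncomputable def hit (a : ℕ) (A : Finset (Fin N)) : ℕ :=
  if h : ∃ k, k + a ≤ 2 * cnt A k then Nat.find h else 0

lemma hit_spec {a : ℕ} (ha : 1 ≤ a) {A : Finset (Fin N)}
    (h : ∃ k, k + a ≤ 2 * cnt A k) :
    hit a A + a = 2 * cnt A (hit a A) ∧ (∀ s < hit a A, ¬ (s + a ≤ 2 * cnt A s)) ∧
      ∀ k, k + a ≤ 2 * cnt A k → hit a A ≤ k := by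
  have key : hit a A + a ≤ 2 * cnt A (hit a A) ∧
      (∀ s < hit a A, ¬ (s + a ≤ 2 * cnt A s)) ∧
      (∀ k, k + a ≤ 2 * cnt A k → hit a A ≤ k) := by
    unfold hit
    rw [dif_pos h]
    exact ⟨Nat.find_spec h, fun s hs => Nat.find_min h hs, fun k hk => Nat.find_le hk⟩
  obtain ⟨hspec, hmin, hle⟩ := key
  refine ⟨?_, hmin, hle⟩
  have h1 : 1 ≤ hit a A := by
    by_contra hcon
    push_neg at hcon
    have h0 : hit a A = 0 := by omega
    rw [h0, cnt_zero] at hspec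
    omega
  have hprev := hmin (hit a A - 1) (by omega)
  have hstep : cnt A (hit a A) ≤ cnt A (hit a A - 1) + 1 := by
    have h2 := cnt_succ_le A (hit a A - 1)
    have heq : hit a A - 1 + 1 = hit a A := by omega
    rwa [heq] at h2
  omega

lemma hit_le {a : ℕ} {A : Finset (Fin N)} (hg : Good a A) (ha : 1 ≤ a) : hit a A ≤ N := by
  obtain ⟨k, hk, hk2⟩ := hg
  have h : ∃ k, k + a ≤ 2 * cnt A k := ⟨k, hk2⟩
  exact le_trans ((hit_spec ha h).2.2 k hk2) hk

lemma card_reflAt_hit {n a : ℕ} (ha : 1 ≤ a) (A : Finset (Fin (2 * n)))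
    (hcard : A.card = n) (hg : Good a A) :
    (reflAt (hit a A) A).card = n + a ∧ Good a (reflAt (hit a A) A) ∧
      hit a (reflAt (hit a A) A) = hit a A ∧
      reflAt (hit a (reflAt (hit a A) A)) (reflAt (hit a A) A) = A := by
  obtain ⟨k₀, hk₀, hk₀2⟩ := hg
  have hex : ∃ k, k + a ≤ 2 * cnt A k := ⟨k₀, hk₀2⟩
  obtain ⟨hhit, hmin, _⟩ := hit_spec ha hex
  have htN : hit a A ≤ 2 * n := hit_le ⟨k₀, hk₀, hk₀2⟩ ha
  have hcntB_t : cnt (reflAt (hit a A) A) (hit a A) = cnt A (hit a A) :=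
    cnt_reflAt_of_le le_rfl A
  have hsepA := cnt_add_sep A htN
  have hsepB := cnt_add_sep (reflAt (hit a A) A) htN
  have hmid := mid_card_add A (hit a A) (2 * n)
  have htot := card_filter_Ico (N := 2 * n) (hit a A) (2 * n) le_rfl htN
  have hAN : cnt A (2 * n) = A.card := cnt_eq_card A le_rfl
  have hBN : cnt (reflAt (hit a A) A) (2 * n) = (reflAt (hit a A) A).card :=
    cnt_eq_card _ le_rfl
  have hBcard : (reflAt (hit a A) A).card = n + a := by omega
  have hgoodB : Good a (reflAt (hit a A) A) := ⟨hit a A, htN, by omega⟩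
  have hhitB : hit a (reflAt (hit a A) A) = hit a A := by
    have hexB : ∃ k, k + a ≤ 2 * cnt (reflAt (hit a A) A) k := ⟨hit a A, by omega⟩
    obtain ⟨hhB, hmB, hlB⟩ := hit_spec ha hexB
    have h1 : hit a (reflAt (hit a A) A) ≤ hit a A := hlB _ (by omega)
    by_contra hne
    have hlt : hit a (reflAt (hit a A) A) < hit a A := lt_of_le_of_ne h1 hne
    have heqc : cnt (reflAt (hit a A) A) (hit a (reflAt (hit a A) A))
        = cnt A (hit a (reflAt (hit a A) A)) := cnt_reflAt_of_le (le_of_lt hlt) A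
    exact hmin _ hlt (by omega)
  refine ⟨hBcard, hgoodB, hhitB, ?_⟩
  rw [hhitB]
  exact reflAt_reflAt _ A

lemma card_reflAt_hit' {n a : ℕ} (ha : 1 ≤ a) (han : a ≤ n) (B : Finset (Fin (2 * n)))
    (hcard : B.card = n + a) :
    Good a B ∧ (reflAt (hit a B) B).card = n ∧ Good a (reflAt (hit a B) B) ∧
      hit a (reflAt (hit a B) B) = hit a B ∧
      reflAt (hit a (reflAt (hit a B) B)) (reflAt (hit a B) B) = B := by
  have hBN : cnt B (2 * n) = B.card := cnt_eq_card B le_rfl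
  have hgood : Good a B := ⟨2 * n, le_rfl, by omega⟩
  obtain ⟨hhit, hmin, _⟩ := hit_spec ha (A := B) ⟨2 * n, by omega⟩
  have htN : hit a B ≤ 2 * n := hit_le hgood ha
  have hcntA_t : cnt (reflAt (hit a B) B) (hit a B) = cnt B (hit a B) :=
    cnt_reflAt_of_le le_rfl B
  have hsepB := cnt_add_sep B htN
  have hsepA := cnt_add_sep (reflAt (hit a B) B) htN
  have hmid := mid_card_add B (hit a B) (2 * n)
  have htot := card_filter_Ico (N := 2 * n) (hit a B) (2 * n) le_rfl htN
  have hAN : cnt (reflAt (hit a B) B) (2 * n) = (reflAt (hit a B) B).card :=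
    cnt_eq_card _ le_rfl
  have hAcard : (reflAt (hit a B) B).card = n := by omega
  have hgoodA : Good a (reflAt (hit a B) B) := ⟨hit a B, htN, by omega⟩
  have hhitA : hit a (reflAt (hit a B) B) = hit a B := by
    have hexA : ∃ k, k + a ≤ 2 * cnt (reflAt (hit a B) B) k := ⟨hit a B, by omega⟩
    obtain ⟨hhA, hmA, hlA⟩ := hit_spec ha hexA
    have h1 : hit a (reflAt (hit a B) B) ≤ hit a B := hlA _ (by omega)
    by_contra hne
    have hlt : hit a (reflAt (hit a B) B) < hit a B := lt_of_le_of_ne h1 hne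
    have heqc : cnt (reflAt (hit a B) B) (hit a (reflAt (hit a B) B))
        = cnt B (hit a (reflAt (hit a B) B)) := cnt_reflAt_of_le (le_of_lt hlt) B
    exact hmin _ hlt (by omega)
  refine ⟨hgood, hAcard, hgoodA, hhitA, ?_⟩
  rw [hhitA]
  exact reflAt_reflAt _ B

/-- Gnedenko–Korolyuk reflection count -/
theorem card_good (n a : ℕ) (ha : 1 ≤ a) (han : a ≤ n)
    [DecidablePred (Good (N := 2 * n) a)] :
    (((univ : Finset (Fin (2 * n))).powersetCard n).filter (Good a)).card
      = (2 * n).choose (n - a) := by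
  classical
  have hmain : (((univ : Finset (Fin (2 * n))).powersetCard n).filter (Good a)).card
      = ((univ : Finset (Fin (2 * n))).powersetCard (n + a)).card := by
    apply Finset.card_bij' (i := fun A _ => reflAt (hit a A) A)
      (j := fun B _ => reflAt (hit a B) B)
    · intro A hA
      simp only [Finset.mem_filter, Finset.mem_powersetCard] at hA
      obtain ⟨⟨_, hcard⟩, hgood⟩ := hA
      have h := card_reflAt_hit ha A hcard hgood
      simp only [Finset.mem_powersetCard]
      exact ⟨Finset.subset_univ _, h.1⟩
    · intro B hB
      simp only [Finset.mem_powersetCard] at hB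
      have h := card_reflAt_hit' ha han B hB.2
      simp only [Finset.mem_filter, Finset.mem_powersetCard]
      exact ⟨⟨Finset.subset_univ _, h.2.1⟩, h.2.2.1⟩
    · intro A hA
      simp only [Finset.mem_filter, Finset.mem_powersetCard] at hA
      obtain ⟨⟨_, hcard⟩, hgood⟩ := hA
      exact (card_reflAt_hit ha A hcard hgood).2.2.2
    · intro B hB
      simp only [Finset.mem_powersetCard] at hB
      exact (card_reflAt_hit' ha han B hB.2).2.2.2.2
  rw [hmain, Finset.card_powersetCard, Finset.card_univ, Fintype.card_fin]
  have h1 : (2 * n).choose (n + a) = (2 * n).choose (2 * n - (n + a)) := by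
    rw [Nat.choose_symm (by omega)]
  rw [h1]
  congr 1
  omega



/-- the pattern of a bijective interleaving: positions taken by the first sample -/
def patt (n : ℕ) (e : Fin (2 * n) ≃ (Fin n ⊕ Fin n)) : Finset (Fin (2 * n)) :=
  univ.filter (fun m => (e m).isLeft)

lemma mem_patt {n : ℕ} {e : Fin (2 * n) ≃ (Fin n ⊕ Fin n)} {m : Fin (2 * n)} :
    m ∈ patt n e ↔ (e m).isLeft := by
  simp [patt]

lemma patt_card {n : ℕ} (e : Fin (2 * n) ≃ (Fin n ⊕ Fin n)) : (patt n e).card = n := by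
  classical
  have h : (univ : Finset (Fin n)).card = (patt n e).card := by
    apply Finset.card_nbij (i := fun i => e.symm (Sum.inl i))
    · intro i _
      simp [mem_patt]
    · intro x _ y _ hxy
      simpa using hxy
    · intro m hm
      simp only [Finset.mem_coe, mem_patt] at hm
      rcases hme : e m with i | j
      · refine ⟨i, by simp, ?_⟩
        simp [← hme]
      · rw [hme] at hm; simp at hm
  rw [← h, Finset.card_univ, Fintype.card_fin]

lemma card_fiber {n : ℕ} (A : Finset (Fin (2 * n))) (hA : A.card = n) :
    (univ.filter (fun e : Fin (2 * n) ≃ (Fin n ⊕ Fin n) => patt n e = A)).card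
      = Nat.factorial n * Nat.factorial n := by
  classical
  have hcA : Fintype.card {m : Fin (2 * n) // m ∈ A} = n := by
    simpa [Fintype.card_coe] using hA
  have hcB : Fintype.card {m : Fin (2 * n) // m ∉ A} = n := by
    have h := Fintype.card_subtype_compl (fun m : Fin (2 * n) => m ∈ A)
    rw [h, Fintype.card_fin, hcA]
    omega
  set uA : {m : Fin (2 * n) // m ∈ A} ≃ Fin n := Fintype.equivFinOfCardEq hcA with huA
  set uB : {m : Fin (2 * n) // m ∉ A} ≃ Fin n := Fintype.equivFinOfCardEq hcB with huB
  set Ψ : (Fin n ≃ Fin n) × (Fin n ≃ Fin n) → (Fin (2 * n) ≃ (Fin n ⊕ Fin n)) :=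
    fun p => (Equiv.sumCompl (fun m => m ∈ A)).symm.trans
      ((uA.trans p.1).sumCongr (uB.trans p.2)) with hΨdef
  have hΨpos : ∀ p m (h : m ∈ A), Ψ p m = Sum.inl (p.1 (uA ⟨m, h⟩)) := by
    intro p m h
    simp only [hΨdef, Equiv.trans_apply, Equiv.sumCompl_symm_apply_of_pos h]
    rfl
  have hΨneg : ∀ p m (h : m ∉ A), Ψ p m = Sum.inr (p.2 (uB ⟨m, h⟩)) := by
    intro p m h
    simp only [hΨdef, Equiv.trans_apply, Equiv.sumCompl_symm_apply_of_neg h]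
    rfl
  have hcard2 : (univ : Finset ((Fin n ≃ Fin n) × (Fin n ≃ Fin n))).card = Nat.factorial n * Nat.factorial n := by
    rw [Finset.card_univ, Fintype.card_prod, Fintype.card_equiv (Equiv.refl (Fin n)),
      Fintype.card_fin]
  rw [← hcard2]
  symm
  apply Finset.card_nbij (i := Ψ)
  · intro p _
    simp only [Finset.mem_coe, Finset.mem_filter, Finset.mem_univ, true_and]
    ext m
    rw [mem_patt]
    by_cases h : m ∈ A
    · rw [hΨpos p m h]
      simp [h]
    · rw [hΨneg p m h]
      simp [h]
  · intro p _ q _ hpq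
    have hfst : p.1 = q.1 := by
      apply Equiv.ext
      intro i
      have h1 := hΨpos p (uA.symm i).1 (uA.symm i).2
      have h2 := hΨpos q (uA.symm i).1 (uA.symm i).2
      rw [hpq] at h1
      rw [h1] at h2
      simpa using h2
    have hsnd : p.2 = q.2 := by
      apply Equiv.ext
      intro i
      have h1 := hΨneg p (uB.symm i).1 (uB.symm i).2
      have h2 := hΨneg q (uB.symm i).1 (uB.symm i).2
      rw [hpq] at h1
      rw [h1] at h2
      simpa using h2
    exact Prod.ext hfst hsnd
  · intro e he
    simp only [Finset.mem_coe, Finset.mem_filter, Finset.mem_univ, true_and] at he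
    have hL : ∀ (m : Fin (2 * n)), m ∈ A → (e m).isLeft := by
      intro m hm
      rw [← he] at hm
      exact mem_patt.mp hm
    have hR : ∀ (m : Fin (2 * n)), m ∉ A → (e m).isRight := by
      intro m hm
      rw [← he] at hm
      rw [mem_patt] at hm
      exact Sum.not_isLeft.mp hm
    set fL : {m : Fin (2 * n) // m ∈ A} → Fin n := fun x => (e x.1).getLeft (hL x.1 x.2)
      with hfL
    set fR : {m : Fin (2 * n) // m ∉ A} → Fin n := fun x => (e x.1).getRight (hR x.1 x.2)
      with hfR
    have heL : ∀ x : {m : Fin (2 * n) // m ∈ A}, e x.1 = Sum.inl (fL x) := by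
      intro x
      exact Sum.eq_left_iff_getLeft_eq.mpr ⟨hL x.1 x.2, rfl⟩
    have heR : ∀ x : {m : Fin (2 * n) // m ∉ A}, e x.1 = Sum.inr (fR x) := by
      intro x
      exact Sum.eq_right_iff_getRight_eq.mpr ⟨hR x.1 x.2, rfl⟩
    have hfLinj : Function.Injective fL := by
      intro x y hxy
      have : e x.1 = e y.1 := by rw [heL x, heL y, hxy]
      exact Subtype.ext (e.injective this)
    have hfRinj : Function.Injective fR := by
      intro x y hxy
      have : e x.1 = e y.1 := by rw [heR x, heR y, hxy]
      exact Subtype.ext (e.injective this)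
    have hfLbij : Function.Bijective fL :=
      (Fintype.bijective_iff_injective_and_card fL).mpr ⟨hfLinj, by rw [hcA, Fintype.card_fin]⟩
    have hfRbij : Function.Bijective fR :=
      (Fintype.bijective_iff_injective_and_card fR).mpr ⟨hfRinj, by rw [hcB, Fintype.card_fin]⟩
    refine ⟨(uA.symm.trans (Equiv.ofBijective fL hfLbij),
             uB.symm.trans (Equiv.ofBijective fR hfRbij)), by simp, ?_⟩
    apply Equiv.ext
    intro m
    by_cases h : m ∈ A
    · rw [hΨpos _ m h]
      simp only [Equiv.trans_apply, Equiv.symm_apply_apply, Equiv.ofBijective_apply]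
      exact (heL ⟨m, h⟩).symm
    · rw [hΨneg _ m h]
      simp only [Equiv.trans_apply, Equiv.symm_apply_apply, Equiv.ofBijective_apply]
      exact (heR ⟨m, h⟩).symm



lemma noAtoms_of_continuous_cdf (μ : Measure ℝ) [IsProbabilityMeasure μ]
    (hcont : Continuous fun x => (μ (Set.Iic x)).toReal) : NoAtoms μ := by
  constructor
  intro x
  have hFeq : ⇑(ProbabilityTheory.cdf μ) = fun y => (μ (Set.Iic y)).toReal := by
    funext y
    rw [ProbabilityTheory.cdf_eq_real]; rfl
  have hF : Continuous (⇑(ProbabilityTheory.cdf μ)) := by rw [hFeq]; exact hcont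
  have hll : leftLim (⇑(ProbabilityTheory.cdf μ)) x = ProbabilityTheory.cdf μ x :=
    leftLim_eq_of_tendsto
      ((hF.tendsto x).mono_left nhdsWithin_le_nhds)
  calc μ {x} = (ProbabilityTheory.cdf μ).measure {x} := by
        rw [ProbabilityTheory.measure_cdf]
    _ = ENNReal.ofReal (ProbabilityTheory.cdf μ x - leftLim (⇑(ProbabilityTheory.cdf μ)) x) :=
        StieltjesFunction.measure_singleton _ x
    _ = 0 := by rw [hll, sub_self, ENNReal.ofReal_zero]

variable {ι : Type*} [Fintype ι]

lemma eval_pair_map (μ : Measure ℝ) [IsProbabilityMeasure μ] {i j : ι} (hij : i ≠ j) :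
    (Measure.pi fun _ : ι => μ).map (fun ω => (ω i, ω j)) = μ.prod μ := by
  classical
  have hmeas : Measurable (fun ω : ι → ℝ => (ω i, ω j)) :=
    (measurable_pi_apply i).prodMk (measurable_pi_apply j)
  refine (Measure.prod_eq ?_).symm
  intro s t hs ht
  rw [Measure.map_apply hmeas (hs.prod ht)]
  have hpre : (fun ω : ι → ℝ => (ω i, ω j)) ⁻¹' (s ×ˢ t)
      = Set.pi Set.univ (fun k => if k = i then s else if k = j then t else Set.univ) := by
    ext ω
    simp only [Set.mem_preimage, Set.mem_prod, Set.mem_pi, Set.mem_univ, true_implies]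
    constructor
    · intro h k
      by_cases hk : k = i
      · subst hk; simpa using h.1
      · by_cases hk' : k = j
        · subst hk'; simp only [hk, if_false, if_pos rfl]; exact h.2
        · simp [hk, hk']
    · intro h
      have h1 := h i
      have h2 := h j
      simp only [if_pos rfl] at h1
      rw [if_neg (by exact fun hc => hij hc.symm), if_pos rfl] at h2
      exact ⟨h1, h2⟩
  rw [hpre, Measure.pi_pi]
  rw [Finset.prod_eq_mul i j hij
    (fun c _ hc => by simp [hc.1, hc.2])
    (fun hc => absurd (Finset.mem_univ i) hc)
    (fun hc => absurd (Finset.mem_univ j) hc)]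
  rw [if_pos rfl, if_neg (fun hc => hij hc.symm), if_pos rfl]

lemma prod_diag_null (μ : Measure ℝ) [IsProbabilityMeasure μ] [NullSingletonClass μ] :
    μ.prod μ {p : ℝ × ℝ | p.1 = p.2} = 0 := by
  have hm : MeasurableSet {p : ℝ × ℝ | p.1 = p.2} :=
    measurableSet_eq_fun measurable_fst measurable_snd
  rw [Measure.prod_apply hm]
  have hfib : ∀ x : ℝ, (Prod.mk x ⁻¹' {p : ℝ × ℝ | p.1 = p.2}) = {x} := by
    intro x; ext y; simp [eq_comm]
  simp only [hfib, measure_singleton]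
  simp

lemma pair_null (μ : Measure ℝ) [IsProbabilityMeasure μ] [NullSingletonClass μ] {i j : ι} (hij : i ≠ j) :
    (Measure.pi fun _ : ι => μ) {ω : ι → ℝ | ω i = ω j} = 0 := by
  have hmeas : Measurable (fun ω : ι → ℝ => (ω i, ω j)) :=
    (measurable_pi_apply i).prodMk (measurable_pi_apply j)
  have hm : MeasurableSet {p : ℝ × ℝ | p.1 = p.2} :=
    measurableSet_eq_fun measurable_fst measurable_snd
  have h1 : {ω : ι → ℝ | ω i = ω j}
      = (fun ω : ι → ℝ => (ω i, ω j)) ⁻¹' {p : ℝ × ℝ | p.1 = p.2} := rfl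
  rw [h1, ← Measure.map_apply hmeas hm, eval_pair_map μ hij, prod_diag_null]

lemma inj_compl_null (μ : Measure ℝ) [IsProbabilityMeasure μ] [NullSingletonClass μ] :
    (Measure.pi fun _ : ι => μ) {ω : ι → ℝ | ¬ Function.Injective ω} = 0 := by
  have hsub : {ω : ι → ℝ | ¬ Function.Injective ω}
      ⊆ ⋃ (i : ι) (j : ι) (_ : i ≠ j), {ω : ι → ℝ | ω i = ω j} := by
    intro ω hω
    simp only [Set.mem_setOf_eq, Function.Injective] at hω
    push_neg at hω
    obtain ⟨i, j, hval, hne⟩ := hω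
    exact Set.mem_iUnion.mpr ⟨i, Set.mem_iUnion.mpr ⟨j, Set.mem_iUnion.mpr ⟨hne, hval⟩⟩⟩
  have hnull : (Measure.pi fun _ : ι => μ)
      (⋃ (i : ι) (j : ι) (_ : i ≠ j), {ω : ι → ℝ | ω i = ω j}) = 0 := by
    apply measure_iUnion_null
    intro i
    apply measure_iUnion_null
    intro j
    apply measure_iUnion_null
    intro hij
    exact pair_null μ hij
  exact measure_mono_null hsub hnull

/-- strict-order events -/
def OE {N : ℕ} (ι : Type*) (e : Fin N ≃ ι) : Set (ι → ℝ) := {ω | StrictMono (ω ∘ e)}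

omit [Fintype ι] in
lemma measurableSet_OE {N : ℕ} (e : Fin N ≃ ι) : MeasurableSet (OE ι e) := by
  have h : OE ι e = ⋂ (p : Fin N × Fin N),
      {ω : ι → ℝ | p.1 < p.2 → ω (e p.1) < ω (e p.2)} := by
    ext ω
    simp only [OE, Set.mem_setOf_eq, Set.mem_iInter, StrictMono, Function.comp_apply]
    exact ⟨fun h p hp => h hp, fun h a b hab => h (a, b) hab⟩
  rw [h]
  apply MeasurableSet.iInter
  intro p
  by_cases hp : p.1 < p.2
  · have h2 : {ω : ι → ℝ | p.1 < p.2 → ω (e p.1) < ω (e p.2)}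
        = {ω : ι → ℝ | ω (e p.1) < ω (e p.2)} := by ext ω; simp [hp]
    rw [h2]
    exact measurableSet_lt (measurable_pi_apply _) (measurable_pi_apply _)
  · have h2 : {ω : ι → ℝ | p.1 < p.2 → ω (e p.1) < ω (e p.2)} = Set.univ := by
      ext ω; simp [hp]
    rw [h2]
    exact MeasurableSet.univ

lemma measure_OE_eq {N : ℕ} (μ : Measure ℝ) [IsProbabilityMeasure μ]
    (e e' : Fin N ≃ ι) :
    (Measure.pi fun _ : ι => μ) (OE ι e) = (Measure.pi fun _ : ι => μ) (OE ι e') := by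
  classical
  set f : ι ≃ ι := e'.symm.trans e with hf
  set T : ((_ : ι) → ℝ) ≃ᵐ ((_ : ι) → ℝ) := MeasurableEquiv.piCongrLeft (π := fun _ : ι => ℝ) f with hT
  have mp : MeasurePreserving T (Measure.pi fun _ : ι => μ) (Measure.pi fun _ : ι => μ) :=
    measurePreserving_piCongrLeft (fun _ : ι => μ) f
  have happ : ∀ (ω : ι → ℝ) (k : Fin N), T ω (e k) = ω (e' k) := by
    intro ω k
    have h1 : e k = f (e' k) := by simp [hf]
    rw [h1]
    exact MeasurableEquiv.piCongrLeft_apply_apply (β := fun _ : ι => ℝ) f ω (e' k)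
  have hpre : T ⁻¹' (OE ι e) = OE ι e' := by
    ext ω
    simp only [Set.mem_preimage, OE, Set.mem_setOf_eq]
    have hcomp : (T ω) ∘ e = ω ∘ e' := by
      funext k
      exact happ ω k
    rw [Function.comp_def, Function.comp_def] at hcomp ⊢
    rw [show (fun k => T ω (e k)) = fun k => ω (e' k) from hcomp]
  rw [← hpre]
  exact (mp.measure_preimage (measurableSet_OE e).nullMeasurableSet).symm

omit [Fintype ι] in
lemma mem_OE_inj {N : ℕ} {e : Fin N ≃ ι} {ω : ι → ℝ} (hω : ω ∈ OE ι e) :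
    Function.Injective ω := by
  have h1 : Function.Injective ((ω ∘ e) ∘ e.symm) :=
    (hω.injective).comp e.symm.injective
  have h2 : (ω ∘ e) ∘ e.symm = ω := by funext i; simp
  rwa [h2] at h1

lemma OE_unique {N : ℕ} (hcard : Fintype.card ι = N) {e e' : Fin N ≃ ι} {ω : ι → ℝ}
    (h1 : ω ∈ OE ι e) (h2 : ω ∈ OE ι e') : e = e' := by
  classical
  have hinj : Function.Injective ω := mem_OE_inj h1
  set s := Finset.image ω Finset.univ with hsdef
  have hs : s.card = N := by
    rw [hsdef, Finset.card_image_of_injective _ hinj, Finset.card_univ, hcard]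
  have hu1 : ω ∘ e = ⇑(s.orderEmbOfFin hs) :=
    Finset.orderEmbOfFin_unique hs
      (fun k => Finset.mem_image_of_mem ω (Finset.mem_univ _)) h1
  have hu2 : ω ∘ e' = ⇑(s.orderEmbOfFin hs) :=
    Finset.orderEmbOfFin_unique hs
      (fun k => Finset.mem_image_of_mem ω (Finset.mem_univ _)) h2
  apply Equiv.ext
  intro k
  apply hinj
  have := congrFun (hu1.trans hu2.symm) k
  simpa using this

lemma OE_cover {N : ℕ} (hcard : Fintype.card ι = N) (ω : ι → ℝ)
    (hinj : Function.Injective ω) : ∃ e : Fin N ≃ ι, ω ∈ OE ι e := by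
  classical
  set s := Finset.image ω Finset.univ with hsdef
  have hs : s.card = N := by
    rw [hsdef, Finset.card_image_of_injective _ hinj, Finset.card_univ, hcard]
  have hmem : ∀ k, s.orderEmbOfFin hs k ∈ s := fun k => Finset.orderEmbOfFin_mem s hs k
  have hmem' : ∀ k, ∃ a, ω a = s.orderEmbOfFin hs k := by
    intro k
    obtain ⟨a, _, ha⟩ := Finset.mem_image.mp (hmem k)
    exact ⟨a, ha⟩
  choose e0 he0 using hmem'
  have hcomp : ω ∘ e0 = ⇑(s.orderEmbOfFin hs) := funext he0
  have hinj0 : Function.Injective e0 := by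
    intro k1 k2 hk
    have : s.orderEmbOfFin hs k1 = s.orderEmbOfFin hs k2 := by
      rw [← he0, ← he0, hk]
    exact (s.orderEmbOfFin hs).injective this
  have hbij : Function.Bijective e0 :=
    (Fintype.bijective_iff_injective_and_card e0).mpr
      ⟨hinj0, by rw [Fintype.card_fin, hcard]⟩
  refine ⟨Equiv.ofBijective e0 hbij, ?_⟩
  show StrictMono (ω ∘ (Equiv.ofBijective e0 hbij))
  have : ω ∘ (Equiv.ofBijective e0 hbij) = ω ∘ e0 := rfl
  rw [this, hcomp]
  exact (s.orderEmbOfFin hs).strictMono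

lemma measure_OE {N : ℕ}
    (μ : Measure ℝ) [IsProbabilityMeasure μ] [NullSingletonClass μ]
    (hcard : Fintype.card ι = N) (e : Fin N ≃ ι) :
    (Measure.pi fun _ : ι => μ) (OE ι e) = ((Nat.factorial N : ℝ≥0∞))⁻¹ := by
  classical
  set P := (Measure.pi fun _ : ι => μ) with hP
  have hdisj : Pairwise (Function.onFun Disjoint (fun e' : Fin N ≃ ι => OE ι e')) := by
    intro x y hxy
    rw [Function.onFun, Set.disjoint_left]
    intro ω h1 h2
    exact hxy (OE_unique hcard h1 h2)
  have hU : P (⋃ e' : Fin N ≃ ι, OE ι e') = ∑' e' : Fin N ≃ ι, P (OE ι e') :=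
    measure_iUnion hdisj (fun e' => measurableSet_OE e')
  have hUeq : P (⋃ e' : Fin N ≃ ι, OE ι e') = 1 := by
    apply le_antisymm
    · exact prob_le_one
    · have hsub : (Set.univ : Set (ι → ℝ)) ⊆
          (⋃ e' : Fin N ≃ ι, OE ι e') ∪ {ω : ι → ℝ | ¬ Function.Injective ω} := by
        intro ω _
        by_cases hω : Function.Injective ω
        · obtain ⟨e', he'⟩ := OE_cover hcard ω hω
          exact Or.inl (Set.mem_iUnion.mpr ⟨e', he'⟩)
        · exact Or.inr hω
      calc (1 : ℝ≥0∞) = P Set.univ := (measure_univ).symm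
        _ ≤ P ((⋃ e' : Fin N ≃ ι, OE ι e') ∪ {ω : ι → ℝ | ¬ Function.Injective ω}) :=
            measure_mono hsub
        _ ≤ P (⋃ e' : Fin N ≃ ι, OE ι e') + P {ω : ι → ℝ | ¬ Function.Injective ω} :=
            measure_union_le _ _
        _ = P (⋃ e' : Fin N ≃ ι, OE ι e') := by rw [inj_compl_null μ, add_zero]
  have hsum : ∑' e' : Fin N ≃ ι, P (OE ι e') = (Nat.factorial N : ℝ≥0∞) * P (OE ι e) := by
    rw [tsum_fintype]
    have hconst : ∀ e' : Fin N ≃ ι, P (OE ι e') = P (OE ι e) := fun e' =>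
      measure_OE_eq μ e' e
    rw [Finset.sum_congr rfl (fun e' _ => hconst e'), Finset.sum_const, Finset.card_univ]
    rw [Fintype.card_equiv (e.trans (Equiv.refl ι)), Fintype.card_fin, nsmul_eq_mul]
  have hkey : (Nat.factorial N : ℝ≥0∞) * P (OE ι e) = 1 := by
    rw [← hsum, ← hU, hUeq]
  have hc0 : (Nat.factorial N : ℝ≥0∞) ≠ 0 := by
    simp [Nat.factorial_ne_zero]
  have hcT : (Nat.factorial N : ℝ≥0∞) ≠ ⊤ := ENNReal.natCast_ne_top _
  calc P (OE ι e) = (Nat.factorial N : ℝ≥0∞)⁻¹ * ((Nat.factorial N : ℝ≥0∞) * P (OE ι e)) := by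
        rw [← mul_assoc, ENNReal.inv_mul_cancel hc0 hcT, one_mul]
    _ = (Nat.factorial N : ℝ≥0∞)⁻¹ := by rw [hkey, mul_one]




noncomputable def fdiff (n : ℕ) (ω : Fin n ⊕ Fin n → ℝ) (x : ℝ) : ℝ :=
  (1 / (n : ℝ)) * ∑ i : Fin n,
      Set.indicator (Set.Iic x) (fun _ => (1 : ℝ)) (ω (Sum.inl i)) -
    (1 / (n : ℝ)) * ∑ j : Fin n,
      Set.indicator (Set.Iic x) (fun _ => (1 : ℝ)) (ω (Sum.inr j))

noncomputable def cX (n : ℕ) (ω : Fin n ⊕ Fin n → ℝ) (x : ℝ) : ℕ :=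
  (univ.filter (fun i : Fin n => ω (Sum.inl i) ≤ x)).card

noncomputable def cY (n : ℕ) (ω : Fin n ⊕ Fin n → ℝ) (x : ℝ) : ℕ :=
  (univ.filter (fun j : Fin n => ω (Sum.inr j) ≤ x)).card

lemma sum_ind_left (n : ℕ) (ω : Fin n ⊕ Fin n → ℝ) (x : ℝ) :
    (∑ i : Fin n, Set.indicator (Set.Iic x) (fun _ => (1 : ℝ)) (ω (Sum.inl i)))
      = (cX n ω x : ℝ) := by
  classical
  rw [cX, Finset.card_filter, Nat.cast_sum]
  apply Finset.sum_congr rfl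
  intro i _
  rw [Set.indicator_apply]
  by_cases h : ω (Sum.inl i) ≤ x
  · simp [Set.mem_Iic, h]
  · simp [Set.mem_Iic, h]

lemma sum_ind_right (n : ℕ) (ω : Fin n ⊕ Fin n → ℝ) (x : ℝ) :
    (∑ j : Fin n, Set.indicator (Set.Iic x) (fun _ => (1 : ℝ)) (ω (Sum.inr j)))
      = (cY n ω x : ℝ) := by
  classical
  rw [cY, Finset.card_filter, Nat.cast_sum]
  apply Finset.sum_congr rfl
  intro j _
  rw [Set.indicator_apply]
  by_cases h : ω (Sum.inr j) ≤ x
  · simp [Set.mem_Iic, h]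
  · simp [Set.mem_Iic, h]

lemma fdiff_eq (n : ℕ) (ω : Fin n ⊕ Fin n → ℝ) (x : ℝ) :
    fdiff n ω x = ((cX n ω x : ℝ) - (cY n ω x : ℝ)) / n := by
  rw [fdiff, sum_ind_left, sum_ind_right]
  ring

lemma range_fdiff_finite (n : ℕ) (ω : Fin n ⊕ Fin n → ℝ) :
    (Set.range (fdiff n ω)).Finite := by
  have hsub : Set.range (fdiff n ω) ⊆
      (fun p : Fin (n + 1) × Fin (n + 1) => (((p.1 : ℕ) : ℝ) - ((p.2 : ℕ) : ℝ)) / n) ''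
        Set.univ := by
    rintro y ⟨x, rfl⟩
    have hX : cX n ω x < n + 1 := by
      have h := Finset.card_filter_le (univ : Finset (Fin n)) (fun i => ω (Sum.inl i) ≤ x)
      rw [Finset.card_univ, Fintype.card_fin] at h
      rw [cX]
      omega
    have hY : cY n ω x < n + 1 := by
      have h := Finset.card_filter_le (univ : Finset (Fin n)) (fun j => ω (Sum.inr j) ≤ x)
      rw [Finset.card_univ, Fintype.card_fin] at h
      rw [cY]
      omega
    refine ⟨(⟨cX n ω x, hX⟩, ⟨cY n ω x, hY⟩), Set.mem_univ _, ?_⟩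
    rw [fdiff_eq]
  exact Set.Finite.subset (Set.finite_univ.image _) hsub

lemma sup_ge_iff (n : ℕ) (ω : Fin n ⊕ Fin n → ℝ) (c : ℝ) :
    (c ≤ ⨆ x, fdiff n ω x) ↔ ∃ x, c ≤ fdiff n ω x := by
  constructor
  · intro h
    have hmem : sSup (Set.range (fdiff n ω)) ∈ Set.range (fdiff n ω) :=
      Set.Nonempty.csSup_mem (Set.range_nonempty _) (range_fdiff_finite n ω)
    obtain ⟨x0, hx0⟩ := hmem
    refine ⟨x0, ?_⟩
    rw [hx0]
    exact h
  · rintro ⟨x, hx⟩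
    refine le_trans hx ?_
    exact le_ciSup (Set.Finite.bddAbove (range_fdiff_finite n ω)) x


-- ## Bridge: counting at a level set
lemma count_seg {n k : ℕ} (hk : k ≤ 2 * n) (e : Fin (2 * n) ≃ (Fin n ⊕ Fin n))
    (ω : Fin n ⊕ Fin n → ℝ) (x : ℝ)
    (hiff : ∀ m : Fin (2 * n), ω (e m) ≤ x ↔ m.val < k) :
    cX n ω x = cnt (patt n e) k ∧ cY n ω x + cnt (patt n e) k = k := by
  classical
  have hcntX : cX n ω x = ((univ : Finset (Fin (2 * n))).filter
      (fun m => (e m).isLeft ∧ m.val < k)).card := by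
    rw [cX]
    apply Finset.card_nbij (i := fun i => e.symm (Sum.inl i))
    · intro i hi
      simp only [Finset.mem_coe, Finset.mem_filter, Finset.mem_univ, true_and] at hi ⊢
      constructor
      · simp
      · rw [← hiff]
        simpa using hi
    · intro i _ j _ hij
      simpa using hij
    · intro m hm
      simp only [Finset.mem_coe, Finset.mem_filter, Finset.mem_univ, true_and] at hm
      rcases hme : e m with i | j
      · refine ⟨i, ?_, ?_⟩
        · simp only [Finset.mem_coe, Finset.mem_filter, Finset.mem_univ, true_and]
          rw [show Sum.inl i = e m from hme.symm, hiff]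
          exact hm.2
        · simp [← hme]
      · rw [hme] at hm
        simp at hm
  have hcntY : cY n ω x = ((univ : Finset (Fin (2 * n))).filter
      (fun m => ¬ (e m).isLeft ∧ m.val < k)).card := by
    rw [cY]
    apply Finset.card_nbij (i := fun j => e.symm (Sum.inr j))
    · intro j hj
      simp only [Finset.mem_coe, Finset.mem_filter, Finset.mem_univ, true_and] at hj ⊢
      constructor
      · simp
      · rw [← hiff]
        simpa using hj
    · intro i _ j _ hij
      simpa using hij
    · intro m hm
      simp only [Finset.mem_coe, Finset.mem_filter, Finset.mem_univ, true_and] at hm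
      rcases hme : e m with i | j
      · rw [hme] at hm
        simp at hm
      · refine ⟨j, ?_, ?_⟩
        · simp only [Finset.mem_coe, Finset.mem_filter, Finset.mem_univ, true_and]
          rw [show Sum.inr j = e m from hme.symm, hiff]
          exact hm.2
        · simp [← hme]
  have hcnt : cnt (patt n e) k = ((univ : Finset (Fin (2 * n))).filter
      (fun m => (e m).isLeft ∧ m.val < k)).card := by
    rw [cnt, patt, Finset.filter_filter]
  have hsplit := Finset.card_filter_add_card_filter_not
    (s := (univ : Finset (Fin (2 * n))).filter (fun m => m.val < k))
    (p := fun m => (e m).isLeft)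
  have h1 : ((univ : Finset (Fin (2 * n))).filter (fun m => m.val < k)).filter
      (fun m => (e m).isLeft)
      = (univ : Finset (Fin (2 * n))).filter (fun m => (e m).isLeft ∧ m.val < k) := by
    rw [Finset.filter_filter]
    apply Finset.filter_congr
    intro m _
    tauto
  have h2 : ((univ : Finset (Fin (2 * n))).filter (fun m => m.val < k)).filter
      (fun m => ¬ (e m).isLeft)
      = (univ : Finset (Fin (2 * n))).filter (fun m => ¬ (e m).isLeft ∧ m.val < k) := by
    rw [Finset.filter_filter]
    apply Finset.filter_congr
    intro m _
    tauto
  rw [h1, h2] at hsplit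
  have htot := card_filter_lt (N := 2 * n) k hk
  refine ⟨by rw [hcntX, hcnt], ?_⟩
  rw [hcntY, hcnt]
  omega

lemma exists_x_iff {n a : ℕ} (ha : 1 ≤ a) (e : Fin (2 * n) ≃ (Fin n ⊕ Fin n))
    (ω : Fin n ⊕ Fin n → ℝ) (hω : StrictMono (ω ∘ e)) :
    (∃ x, a + cY n ω x ≤ cX n ω x) ↔ Good a (patt n e) := by
  classical
  constructor
  · rintro ⟨x, hx⟩
    set k := ((univ : Finset (Fin (2 * n))).filter (fun m => ω (e m) ≤ x)).card with hkdef
    have hk : k ≤ 2 * n := by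
      have h := Finset.card_filter_le (univ : Finset (Fin (2 * n))) (fun m => ω (e m) ≤ x)
      rwa [Finset.card_univ, Fintype.card_fin] at h
    have hiff : ∀ m : Fin (2 * n), ω (e m) ≤ x ↔ m.val < k := by
      intro m
      constructor
      · intro hm
        have hsub : (univ : Finset (Fin (2 * n))).filter (fun m' => m'.val < m.val + 1)
            ⊆ (univ : Finset (Fin (2 * n))).filter (fun m' => ω (e m') ≤ x) := by
          intro m' hm'
          simp only [Finset.mem_filter, Finset.mem_univ, true_and] at hm' ⊢
          have hle : m' ≤ m := by
            rw [Fin.le_def]; omega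
          exact le_trans (hω.monotone (by exact hle)) hm
        have hcard := Finset.card_le_card hsub
        rw [card_filter_lt (N := 2 * n) (m.val + 1) (by omega)] at hcard
        rw [hkdef]
        omega
      · intro hm
        by_contra hcon
        have hsub : (univ : Finset (Fin (2 * n))).filter (fun m' => ω (e m') ≤ x)
            ⊆ (univ : Finset (Fin (2 * n))).filter (fun m' => m'.val < m.val) := by
          intro m' hm'
          simp only [Finset.mem_filter, Finset.mem_univ, true_and] at hm' ⊢
          by_contra hge
          have hle : m ≤ m' := by rw [Fin.le_def]; omega
          exact hcon (le_trans (hω.monotone hle) hm')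
        have hcard := Finset.card_le_card hsub
        rw [card_filter_lt (N := 2 * n) m.val (by omega)] at hcard
        omega
    obtain ⟨hX, hY⟩ := count_seg hk e ω x hiff
    exact ⟨k, hk, by omega⟩
  · rintro ⟨k, hk, hineq⟩
    have hcle := cnt_le (patt n e) k
    have hk1 : 1 ≤ k := by
      by_contra hcon
      have hk0 : k = 0 := by omega
      rw [hk0, cnt_zero] at hineq
      omega
    set m0 : Fin (2 * n) := ⟨k - 1, by omega⟩ with hm0
    refine ⟨ω (e m0), ?_⟩
    have hiff : ∀ m : Fin (2 * n), ω (e m) ≤ ω (e m0) ↔ m.val < k := by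
      intro m
      rw [show ω (e m) = (ω ∘ e) m from rfl, show ω (e m0) = (ω ∘ e) m0 from rfl,
        hω.le_iff_le, Fin.le_def]
      simp only [hm0]
      omega
    obtain ⟨hX, hY⟩ := count_seg hk e ω (ω (e m0)) hiff
    omega

lemma event_iff_good {n a : ℕ} (hn : 1 ≤ n) (ha : 1 ≤ a)
    (e : Fin (2 * n) ≃ (Fin n ⊕ Fin n)) (ω : Fin n ⊕ Fin n → ℝ)
    (hω : StrictMono (ω ∘ e)) :
    ((a : ℝ) / n ≤ ⨆ x, fdiff n ω x) ↔ Good a (patt n e) := by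
  rw [sup_ge_iff]
  rw [← exists_x_iff ha e ω hω]
  apply exists_congr
  intro x
  rw [fdiff_eq]
  have hn0 : (0 : ℝ) < n := by
    have : (1 : ℝ) ≤ n := by exact_mod_cast hn
    linarith
  rw [div_le_div_iff_of_pos_right hn0, le_sub_iff_add_le]
  constructor
  · intro h
    exact_mod_cast h
  · intro h
    exact_mod_cast h

end GK

open GK

/-- Gnedenko–Korolyuk exact distribution: two i.i.d. samples of size `n`
from a common continuous distribution `μ`; the first sample is indexed by
`Sum.inl`, the second by `Sum.inr`. -/
theorem stmt15 (n : ℕ) (hn : 1 ≤ n) (μ : Measure ℝ) [IsProbabilityMeasure μ]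
    (hcont : Continuous fun x => (μ (Set.Iic x)).toReal)
    (a : ℕ) (ha1 : 1 ≤ a) (han : a ≤ n) :
    (Measure.pi fun _ : Fin n ⊕ Fin n => μ)
        {ω | Real.sqrt ((n : ℝ) ^ 2 / (2 * n)) *
              (⨆ x : ℝ,
                ((1 / (n : ℝ)) * ∑ i : Fin n,
                    Set.indicator (Set.Iic x) (fun _ => (1 : ℝ)) (ω (Sum.inl i)) -
                  (1 / (n : ℝ)) * ∑ j : Fin n,
                    Set.indicator (Set.Iic x) (fun _ => (1 : ℝ)) (ω (Sum.inr j)))) ≥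
            Real.sqrt ((n : ℝ) ^ 2 / (2 * n)) * ((a : ℝ) / n)} =
      ENNReal.ofReal (((2 * n).choose (n - a) : ℝ) / ((2 * n).choose n)) := by
  classical
  have hNA : NullSingletonClass μ := noAtoms_of_continuous_cdf μ hcont
  have hcard : Fintype.card (Fin n ⊕ Fin n) = 2 * n := by
    rw [Fintype.card_sum, Fintype.card_fin]
    omega
  have hn0 : (0 : ℝ) < n := by
    have : (1 : ℝ) ≤ n := by exact_mod_cast hn
    linarith
  have hsqrt : 0 < Real.sqrt ((n : ℝ) ^ 2 / (2 * n)) := by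
    apply Real.sqrt_pos.mpr
    positivity
  set P := (Measure.pi fun _ : Fin n ⊕ Fin n => μ) with hP
  -- the event set, reduced
  have hEset : {ω : Fin n ⊕ Fin n → ℝ | Real.sqrt ((n : ℝ) ^ 2 / (2 * n)) *
              (⨆ x : ℝ,
                ((1 / (n : ℝ)) * ∑ i : Fin n,
                    Set.indicator (Set.Iic x) (fun _ => (1 : ℝ)) (ω (Sum.inl i)) -
                  (1 / (n : ℝ)) * ∑ j : Fin n,
                    Set.indicator (Set.Iic x) (fun _ => (1 : ℝ)) (ω (Sum.inr j)))) ≥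
            Real.sqrt ((n : ℝ) ^ 2 / (2 * n)) * ((a : ℝ) / n)}
      = {ω : Fin n ⊕ Fin n → ℝ | (a : ℝ) / n ≤ ⨆ x, fdiff n ω x} := by
    ext ω
    simp only [Set.mem_setOf_eq, ge_iff_le]
    exact mul_le_mul_iff_right₀ hsqrt
  rw [hEset]
  -- good bijections
  set goodE : Finset (Fin (2 * n) ≃ (Fin n ⊕ Fin n)) :=
    univ.filter (fun e => Good a (patt n e)) with hgoodE
  -- a.e. equality with union of order events
  have hUsub : (⋃ e ∈ goodE, OE (Fin n ⊕ Fin n) e)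
      ⊆ {ω : Fin n ⊕ Fin n → ℝ | (a : ℝ) / n ≤ ⨆ x, fdiff n ω x} := by
    intro ω hω
    simp only [Set.mem_iUnion] at hω
    obtain ⟨e, he, hωe⟩ := hω
    rw [hgoodE, Finset.mem_filter] at he
    exact Set.mem_setOf_eq ▸ (event_iff_good hn ha1 e ω hωe).mpr he.2
  have hEsub : ∀ ω ∈ {ω : Fin n ⊕ Fin n → ℝ | (a : ℝ) / n ≤ ⨆ x, fdiff n ω x},
      Function.Injective ω → ω ∈ ⋃ e ∈ goodE, OE (Fin n ⊕ Fin n) e := by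
    intro ω hω hinj
    obtain ⟨e, he⟩ := OE_cover hcard ω hinj
    have hgood : Good a (patt n e) := (event_iff_good hn ha1 e ω he).mp hω
    simp only [Set.mem_iUnion]
    exact ⟨e, by rw [hgoodE, Finset.mem_filter]; exact ⟨Finset.mem_univ _, hgood⟩, he⟩
  have hae : {ω : Fin n ⊕ Fin n → ℝ | (a : ℝ) / n ≤ ⨆ x, fdiff n ω x}
      =ᵐ[P] (⋃ e ∈ goodE, OE (Fin n ⊕ Fin n) e) := by
    rw [MeasureTheory.ae_eq_set]
    constructor
    · have hsub2 : ({ω : Fin n ⊕ Fin n → ℝ | (a : ℝ) / n ≤ ⨆ x, fdiff n ω x} \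
          (⋃ e ∈ goodE, OE (Fin n ⊕ Fin n) e))
          ⊆ {ω : Fin n ⊕ Fin n → ℝ | ¬ Function.Injective ω} := by
        intro ω hω
        by_contra hcon
        simp only [Set.mem_setOf_eq, not_not] at hcon
        exact hω.2 (hEsub ω hω.1 hcon)
      exact measure_mono_null hsub2 (inj_compl_null μ)
    · rw [Set.diff_eq_empty.mpr hUsub]
      exact measure_empty
  rw [measure_congr hae]
  -- measure of the union
  have hdisjU : (↑goodE : Set (Fin (2 * n) ≃ (Fin n ⊕ Fin n))).PairwiseDisjoint
      (fun e => OE (Fin n ⊕ Fin n) e) := by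
    intro x _ y _ hxy
    rw [Function.onFun, Set.disjoint_left]
    intro ω h1 h2
    exact hxy (OE_unique hcard h1 h2)
  rw [measure_biUnion_finset hdisjU (fun e _ => measurableSet_OE e)]
  have hval : ∀ e ∈ goodE, P (OE (Fin n ⊕ Fin n) e)
      = ((Nat.factorial (2 * n) : ℝ≥0∞))⁻¹ := fun e _ => measure_OE μ hcard e
  rw [Finset.sum_congr rfl hval, Finset.sum_const, nsmul_eq_mul]
  -- counting goodE
  have hgcard : goodE.card
      = (((univ : Finset (Fin (2 * n))).powersetCard n).filter (Good a)).card
        * (Nat.factorial n * Nat.factorial n) := by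
    rw [Finset.card_eq_sum_card_fiberwise (f := patt n)
      (t := ((univ : Finset (Fin (2 * n))).powersetCard n).filter (Good a))
      (fun e he => by
        rw [Finset.mem_coe, hgoodE, Finset.mem_filter] at he
        rw [Finset.mem_coe, Finset.mem_filter, Finset.mem_powersetCard]
        exact ⟨⟨Finset.subset_univ _, patt_card e⟩, he.2⟩)]
    rw [Finset.sum_congr rfl (fun A hA => ?_), Finset.sum_const, smul_eq_mul]
    rw [Finset.mem_filter, Finset.mem_powersetCard] at hA
    have hfib : goodE.filter (fun e => patt n e = A)
        = univ.filter (fun e : Fin (2 * n) ≃ (Fin n ⊕ Fin n) => patt n e = A) := by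
      ext e
      simp only [hgoodE, Finset.mem_filter, Finset.mem_univ, true_and]
      constructor
      · exact fun h => h.2
      · intro h
        exact ⟨h ▸ hA.2, h⟩
    rw [hfib, card_fiber A hA.1.2]
  rw [hgcard, card_good n a ha1 han]
  -- final arithmetic
  have hfact : (2 * n).choose n * (Nat.factorial n * Nat.factorial n)
      = Nat.factorial (2 * n) := by
    have h := Nat.choose_mul_factorial_mul_factorial (show n ≤ 2 * n by omega)
    have h2 : 2 * n - n = n := by omega
    rw [h2] at h
    rw [← h]
    ring
  have hchpos : (0 : ℝ) < ((2 * n).choose n : ℝ) := by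
    exact_mod_cast Nat.choose_pos (show n ≤ 2 * n by omega)
  rw [ENNReal.ofReal_div_of_pos hchpos, ENNReal.ofReal_natCast, ENNReal.ofReal_natCast]
  have hF0 : ((Nat.factorial n * Nat.factorial n : ℕ) : ℝ≥0∞) ≠ 0 := by
    simp [Nat.factorial_ne_zero]
  have hFtop : ((Nat.factorial n * Nat.factorial n : ℕ) : ℝ≥0∞) ≠ ⊤ :=
    ENNReal.natCast_ne_top _
  calc ((((2 * n).choose (n - a) * (Nat.factorial n * Nat.factorial n) : ℕ)) : ℝ≥0∞)
        * ((Nat.factorial (2 * n) : ℝ≥0∞))⁻¹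
      = (((2 * n).choose (n - a) : ℕ) : ℝ≥0∞)
          * ((Nat.factorial n * Nat.factorial n : ℕ) : ℝ≥0∞)
        / ((((2 * n).choose n : ℕ) : ℝ≥0∞)
          * ((Nat.factorial n * Nat.factorial n : ℕ) : ℝ≥0∞)) := by
        rw [div_eq_mul_inv, ← Nat.cast_mul, ← Nat.cast_mul, hfact]
    _ = (((2 * n).choose (n - a) : ℕ) : ℝ≥0∞) / (((2 * n).choose n : ℕ) : ℝ≥0∞) :=
        ENNReal.mul_div_mul_right _ _ hF0 hFtop
    _ = (((2 * n).choose (n - a) : ℕ) : ℝ≥0∞) / (((2 * n).choose n : ℕ) : ℝ≥0∞) := rfl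
end
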